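/- arXiv:2301.10190 — 4 statements merged into one kernel-verified Lean document; each statement's English description precedes it below -/
import Mathlib

section
/- Every n-vertex graph G with connectivity κ(G) at least its independence number α(G) is Hamiltonian. -/
open SimpleGraph Finset


/-- The independence number of a graph: the largest size of a set of pairwise
non-adjacent vertices. -/
noncomputable def indepNum {V : Type*} (G : SimpleGraph V) [Fintype V] : ℕ :=
  sSup {k | ∃ s : Finset V, (s : Set V).Pairwise (fun a b => ¬ G.Adj a b) ∧ s.card = k}

/-- The vertex connectivity of a graph: the least size of a set of vertices whose
removal disconnects the graph or reduces it to at most one vertex. -/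
noncomputable def vertexConnectivity {V : Type*} (G : SimpleGraph V) [Fintype V] [DecidableEq V] : ℕ :=
  sInf {k | ∃ S : Finset V, S.card = k ∧
    ((Sᶜ : Finset V).card ≤ 1 ∨ ¬ (G.induce ((Sᶜ : Finset V) : Set V)).Connected)}

/-- `G` has a cycle of length `ℓ`. -/
def hasCycleOfLength {V : Type*} (G : SimpleGraph V) (ℓ : ℕ) : Prop :=
  ∃ (x : V) (c : G.Walk x x), c.IsCycle ∧ c.length = ℓ

namespace ChvatalErdos

variable {V : Type*} {G : SimpleGraph V} {l : List V} {u v w x y z s t w' z' v' a b c : V}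





/-- A list representing a cycle in `G`. -/
structure IsCycList (G : SimpleGraph V) (l : List V) : Prop where
  nodup : l.Nodup
  three_le : 3 ≤ l.length
  chain : l.Chain' G.Adj
  wderiv : ∀ a ∈ l.getLast?, ∀ b ∈ l.head?, G.Adj a b

lemma IsCycList.ne_nil (h : IsCycList G l) : l ≠ [] := by
  intro e
  have := h.three_le
  rw [e] at this
  simp at this

lemma IsCycList.pos (h : IsCycList G l) : 0 < l.length := by
  have := h.three_le; omega

lemma IsCycList.wrap (h : IsCycList G l) :
    G.Adj (l.getLast h.ne_nil) (l.head h.ne_nil) := by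
  refine h.wderiv _ ?_ _ ?_
  · rw [List.getLast?_eq_getLast h.ne_nil]; rfl
  · rw [List.head?_eq_head h.ne_nil]; rfl

lemma IsCycList.getAdj (h : IsCycList G l) (i : ℕ) (hi : i < l.length) :
    G.Adj (l[i]'hi) (l[(i+1) % l.length]'(Nat.mod_lt _ h.pos)) := by
  rcases lt_or_ge (i+1) l.length with h1 | h1
  · have hmod : (i+1) % l.length = i+1 := Nat.mod_eq_of_lt h1
    have := List.isChain_iff_getElem.1 h.chain i (by omega)
    convert this using 2
  · have hieq : i = l.length - 1 := by omega
    have hmod : (i+1) % l.length = 0 := by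
      have : i + 1 = l.length := by omega
      rw [this, Nat.mod_self]
    have hw := h.wrap
    rw [List.getLast_eq_getElem, List.head_eq_getElem_zero] at hw
    convert hw using 2 <;> omega

lemma isCycList_of_getAdj (hnd : l.Nodup) (h3 : 3 ≤ l.length)
    (hadj : ∀ (i : ℕ) (hi : i < l.length),
      G.Adj (l[i]'hi) (l[(i+1) % l.length]'(Nat.mod_lt _ (by omega)))) :
    IsCycList G l := by
  have hne : l ≠ [] := by intro e; rw [e] at h3; simp at h3
  refine ⟨hnd, h3, ?_, ?_⟩
  · rw [List.Chain', List.isChain_iff_getElem]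
    intro i hi
    have := hadj i (by omega)
    have hmod : (i+1) % l.length = i+1 := Nat.mod_eq_of_lt (by omega)
    convert this using 2 <;> omega
  · intro a ha b hb
    rw [List.getLast?_eq_getLast hne] at ha
    rw [List.head?_eq_head hne] at hb
    simp only [Option.mem_def, Option.some_inj] at ha hb
    subst ha; subst hb
    rw [List.getLast_eq_getElem, List.head_eq_getElem_zero]
    have hL0 : 0 < l.length := by omega
    have := hadj (l.length - 1) (Nat.sub_lt hL0 one_pos)
    have hmod : (l.length - 1 + 1) % l.length = 0 := by
      have : l.length - 1 + 1 = l.length := by omega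
      rw [this, Nat.mod_self]
    convert this using 2
    omega

lemma IsCycList.rotate (h : IsCycList G l) (n : ℕ) : IsCycList G (l.rotate n) := by
  have hlen : (l.rotate n).length = l.length := List.length_rotate l n
  have h3 := h.three_le
  refine isCycList_of_getAdj ((l.rotate_perm n).nodup_iff.2 h.nodup) (by omega) ?_
  intro i hi
  rw [List.getElem_rotate, List.getElem_rotate]
  have h1 : ((i+1) % (l.rotate n).length + n) % l.length = ((i + n) % l.length + 1) % l.length := by
    rw [hlen, Nat.mod_add_mod, Nat.mod_add_mod]
    congr 1
    omega
  have h2 := h.getAdj ((i + n) % l.length) (Nat.mod_lt _ h.pos)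
  simp only [h1]
  exact h2


/-- `z` is the successor of `w` on the cycle list `l`. -/
def SuccRel (l : List V) (w z : V) : Prop :=
  ∃ (m : ℕ) (hm : m < l.length),
    l[m]'hm = w ∧ l[(m+1) % l.length]'(Nat.mod_lt _ (by omega)) = z

lemma succRel_exists (hw : w ∈ l) : ∃ z, SuccRel l w z := by
  obtain ⟨m, hm, he⟩ := List.mem_iff_getElem.1 hw
  exact ⟨_, m, hm, he, rfl⟩

lemma SuccRel.mem_left (h : SuccRel l w z) : w ∈ l := by
  obtain ⟨m, hm, h1, h2⟩ := h
  exact h1 ▸ List.getElem_mem _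
lemma SuccRel.mem_right (h : SuccRel l w z) : z ∈ l := by
  obtain ⟨m, hm, h1, h2⟩ := h
  exact h2 ▸ List.getElem_mem _

lemma SuccRel.adj (hl : IsCycList G l) (h : SuccRel l w z) : G.Adj w z := by
  obtain ⟨m, hm, h1, h2⟩ := h
  subst h1; subst h2
  exact hl.getAdj m hm

private lemma mod_succ_inj {L m m' : ℕ} (hm : m < L) (hm' : m' < L)
    (he : (m+1) % L = (m'+1) % L) : m = m' := by
  rcases Nat.lt_or_ge (m+1) L with h1 | h1 <;> rcases Nat.lt_or_ge (m'+1) L with h2 | h2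
  · rw [Nat.mod_eq_of_lt h1, Nat.mod_eq_of_lt h2] at he; omega
  · have : m' + 1 = L := by omega
    rw [Nat.mod_eq_of_lt h1, this, Nat.mod_self] at he; omega
  · have : m + 1 = L := by omega
    rw [Nat.mod_eq_of_lt h2, this, Nat.mod_self] at he; omega
  · omega

lemma SuccRel.inj (hnd : l.Nodup) (h : SuccRel l w z) (h' : SuccRel l w' z)
    : w = w' := by
  obtain ⟨m, hm, h1, h2⟩ := h
  obtain ⟨m', hm', h1', h2'⟩ := h'
  have heq := (List.Nodup.getElem_inj_iff hnd).1 (h2.trans h2'.symm)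
  have := mod_succ_inj hm hm' heq
  subst this
  exact h1.symm.trans h1'

lemma SuccRel.right_unique (hnd : l.Nodup) (h : SuccRel l w z) (h' : SuccRel l w z')
    : z = z' := by
  obtain ⟨m, hm, h1, h2⟩ := h
  obtain ⟨m', hm', h1', h2'⟩ := h'
  have : m = m' := (List.Nodup.getElem_inj_iff hnd).1 (h1.trans h1'.symm)
  subst this
  exact h2.symm.trans h2'

lemma SuccRel.ne (hl : IsCycList G l) (h : SuccRel l w z) : z ≠ w :=
  (h.adj hl).symm.ne

lemma SuccRel.rotate (h : SuccRel l w z) (n : ℕ) : SuccRel (l.rotate n) w z := by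
  obtain ⟨m, hm, h1, h2⟩ := h
  have hL : 0 < l.length := by omega
  have hlen : (l.rotate n).length = l.length := List.length_rotate l n
  have hqr : l.length * (n / l.length) + n % l.length = n := Nat.div_add_mod n l.length
  have hrL : n % l.length < l.length := Nat.mod_lt _ hL
  have hmul : l.length * (n / l.length + 1) = l.length * (n / l.length) + l.length := by ring
  refine ⟨(m + l.length - n % l.length) % l.length, by rw [hlen]; exact Nat.mod_lt _ hL, ?_, ?_⟩
  · rw [List.getElem_rotate]
    have hkey : ((m + l.length - n % l.length) % l.length + n) % l.length = m := by
      rw [Nat.mod_add_mod]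
      have he : m + l.length - n % l.length + n = m + l.length * (n / l.length + 1) := by omega
      rw [he, Nat.mul_comm, Nat.add_mul_mod_self_right]
      exact Nat.mod_eq_of_lt hm
    simp only [hkey]
    exact h1
  · rw [List.getElem_rotate]
    have hkey : (((m + l.length - n % l.length) % l.length + 1) % l.length + n) % l.length
        = (m + 1) % l.length := by
      rw [Nat.mod_add_mod, Nat.add_assoc, Nat.mod_add_mod]
      have he : m + l.length - n % l.length + (1 + n)
          = (m + 1) + l.length * (n / l.length + 1) := by omega
      rw [he, Nat.mul_comm, Nat.add_mul_mod_self_right]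
    simp only [hlen]
    simp only [hkey]
    exact h2

/-- head and last of a rotation. -/
lemma rotate_head {i : ℕ} (hi : i < l.length) (hne : l.rotate (i+1) ≠ []) :
    (l.rotate (i+1)).head hne = l[(i+1) % l.length]'(Nat.mod_lt _ (by omega)) := by
  have hlen : (l.rotate (i+1)).length = l.length := List.length_rotate l (i+1)
  rw [List.head_eq_getElem_zero, List.getElem_rotate]
  simp

lemma rotate_getLast {i : ℕ} (hi : i < l.length) (hne : l.rotate (i+1) ≠ []) :
    (l.rotate (i+1)).getLast hne = l[i]'hi := by
  have hlen : (l.rotate (i+1)).length = l.length := List.length_rotate l (i+1)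
  rw [List.getLast_eq_getElem, List.getElem_rotate]
  have : ((l.rotate (i+1)).length - 1 + (i+1)) % l.length = i := by
    rw [hlen]
    have : l.length - 1 + (i + 1) = l.length + i := by omega
    rw [this, Nat.add_comm l.length i, Nat.add_mod_right]
    exact Nat.mod_eq_of_lt hi
  simp only [this]

/-! ### Walk/list conversions -/

lemma support_getElem?_one_of_edge {a b x : V} {p : G.Walk a b}
    (hp : p.support.Nodup) (he : s(x, a) ∈ p.edges) : p.support[1]? = some x := by
  cases p with
  | nil => simp at he
  | @cons _ c _ hadj q =>
    simp only [Walk.edges_cons, List.mem_cons] at he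
    rcases he with he | he
    · rw [Sym2.eq_iff] at he
      rcases he with ⟨h1, h2⟩ | ⟨h1, h2⟩
      · exact absurd (h1 ▸ h2) hadj.ne
      · subst h1
        rw [Walk.support_cons]
        rw [q.support_eq_cons]
        simp
    · exfalso
      have : a ∈ q.support := q.snd_mem_support_of_mem_edges he
      rw [Walk.support_cons, List.nodup_cons] at hp
      exact hp.1 this

lemma exists_walk_support (G : SimpleGraph V) :
    ∀ (l' : List V) (a : V), List.Chain G.Adj a l' →
      ∃ (b : V) (w : G.Walk a b), w.support = a :: l' ∧
        ∀ (h : (a :: l') ≠ []), (a :: l').getLast h = b := by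
  intro l'
  induction l' with
  | nil =>
    intro a _
    exact ⟨a, Walk.nil, by simp, fun h => by simp⟩
  | cons c t ih =>
    intro a hch
    rw [List.Chain, List.isChain_cons_cons] at hch
    obtain ⟨b, w, hsupp, hlast⟩ := ih c hch.2
    refine ⟨b, Walk.cons hch.1 w, by simp [hsupp], fun h => ?_⟩
    rw [List.getLast_cons (by simp)]
    exact hlast (by simp)

lemma IsCycList.isHamiltonianCycle [DecidableEq V] (hl : IsCycList G l)
    (hall : ∀ v : V, v ∈ l) : ∃ (x : V) (c : G.Walk x x), c.IsHamiltonianCycle := by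
  have hne := hl.ne_nil
  have hL := hl.three_le
  have hch : List.Chain G.Adj (l.head hne) l.tail := by
    have h2 : List.Chain' G.Adj (l.head hne :: l.tail) := by
      rw [List.cons_head_tail hne]; exact hl.chain
    exact h2
  obtain ⟨b, p, hsupp, hlast⟩ := exists_walk_support G l.tail (l.head hne) hch
  have hal : l.head hne :: l.tail = l := List.cons_head_tail hne
  rw [hal] at hsupp
  have hb2 : b = l.getLast hne := by
    have h1 := p.getLast_support
    simp only [hsupp] at h1
    exact h1.symm
  have hadj : G.Adj b (l.head hne) := hb2 ▸ hl.wrap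
  have hpath : p.IsPath := Walk.IsPath.mk' (by rw [hsupp]; exact hl.nodup)
  have hedge : ¬ s(b, l.head hne) ∈ p.edges := by
    intro he
    have h1 := support_getElem?_one_of_edge hpath.support_nodup he
    rw [hsupp] at h1
    rw [List.getElem?_eq_getElem (by omega)] at h1
    have h2 : l[1]'(by omega) = b := Option.some.inj h1
    have h3 : l[1]'(by omega) = l[l.length - 1]'(by omega) := by
      rw [h2, hb2, List.getLast_eq_getElem]
    have := (List.Nodup.getElem_inj_iff hl.nodup).1 h3
    omega
  have hcyc : (Walk.cons hadj p).IsCycle := (Walk.cons_isCycle_iff p hadj).2 ⟨hpath, hedge⟩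
  refine ⟨b, Walk.cons hadj p, hcyc, ?_⟩
  intro v
  rw [Walk.support_tail_of_not_nil _ hcyc.not_nil, Walk.support_cons, List.tail_cons, hsupp]
  exact List.count_eq_one_of_mem hl.nodup (hall v)

lemma isCycList_support_tail {x : V} {c : G.Walk x x} (hc : c.IsCycle) :
    IsCycList G c.support.tail := by
  have hne : c.support.tail ≠ [] := by
    have h1 := c.length_support
    have h2 := hc.three_le_length
    intro he
    have h3 : c.support.tail.length = 0 := by rw [he]; rfl
    rw [List.length_tail, h1] at h3
    omega
  obtain ⟨y, t, hyt⟩ := List.exists_cons_of_ne_nil hne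
  have hsupp : c.support = x :: y :: t := by rw [c.support_eq_cons, hyt]
  have hchain := c.isChain_adj_support
  rw [hsupp, List.isChain_cons_cons] at hchain
  refine ⟨hc.support_nodup, ?_, by rw [hyt]; exact hchain.2, ?_⟩
  · have h1 := c.length_support
    have h2 := hc.three_le_length
    have h3 : c.support.tail.length = c.support.length - 1 := by simp
    omega
  · intro p hp q hq
    rw [List.getLast?_eq_getLast hne, Option.mem_def, Option.some_inj] at hp
    rw [List.head?_eq_head hne, Option.mem_def, Option.some_inj] at hq
    have hgl : c.support.tail.getLast hne = x := by
      have h1 := c.getLast_support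
      simp only [hsupp] at h1
      rw [List.getLast_cons (by simp)] at h1
      simp only [hyt, h1]
    have hhd : c.support.tail.head hne = y := by simp only [hyt]; rfl
    subst hp
    subst hq
    rw [hgl, hhd]
    exact hchain.1
/-! ### The component off the cycle -/

/-- Vertices reachable from `u` avoiding the list `l`. -/
def Hset (G : SimpleGraph V) (l : List V) (u : V) : Set V :=
  {v | ∃ w : G.Walk u v, ∀ x ∈ w.support, x ∉ l}

lemma Hset.self_mem (hu : u ∉ l) : u ∈ Hset G l u :=
  ⟨Walk.nil, by simp [hu]⟩

lemma Hset.not_mem_list (hv : v ∈ Hset G l u) : v ∉ l := by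
  obtain ⟨w, hw⟩ := hv
  exact hw v w.end_mem_support

lemma Hset.extend (hv : v ∈ Hset G l u) (hadj : G.Adj v x) (hx : x ∉ l) :
    x ∈ Hset G l u := by
  obtain ⟨w, hw⟩ := hv
  refine ⟨w.concat hadj, ?_⟩
  intro y hy
  rw [Walk.support_concat, List.mem_append] at hy
  rcases hy with hy | hy
  · exact hw y hy
  · simp only [List.mem_singleton] at hy; subst hy; exact hx

lemma Hset.exists_path [DecidableEq V] (hv : v ∈ Hset G l u) (hv' : v' ∈ Hset G l u) :
    ∃ P : List V, P ≠ [] ∧ P.Nodup ∧ P.Chain' G.Adj ∧ P.head? = some v ∧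
      P.getLast? = some v' ∧ ∀ x ∈ P, x ∉ l := by
  obtain ⟨w1, hw1⟩ := hv
  obtain ⟨w2, hw2⟩ := hv'
  set W := w1.reverse.append w2 with hW
  refine ⟨W.bypass.support, W.bypass.support_ne_nil,
    W.bypass_isPath.support_nodup, W.bypass.isChain_adj_support, ?_, ?_, ?_⟩
  · rw [List.head?_eq_head W.bypass.support_ne_nil]
    have := W.bypass.head_support
    simp only [this]
  · rw [List.getLast?_eq_getLast W.bypass.support_ne_nil]
    have := W.bypass.getLast_support
    simp only [this]
  · intro x hx
    have hx2 := W.support_bypass_subset hx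
    rw [hW, Walk.support_append, List.mem_append] at hx2
    rcases hx2 with hx2 | hx2
    · rw [Walk.support_reverse, List.mem_reverse] at hx2; exact hw1 x hx2
    · exact hw2 x (List.mem_of_mem_tail hx2)

/-! ### Surgery lemmas -/

lemma surgery1 [DecidableEq V] (hl : IsCycList G l)
    (hmax : ∀ l', IsCycList G l' → l'.length ≤ l.length)
    {s z v v' u : V} (hsz : SuccRel l s z)
    (hv : v ∈ Hset G l u) (hv' : v' ∈ Hset G l u)
    (hsv : G.Adj s v) (hzv' : G.Adj z v') : False := by
  obtain ⟨m, hm, h1, h2⟩ := hsz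
  obtain ⟨P, hPne, hPnd, hPch, hPhd, hPlast, hPl⟩ := Hset.exists_path hv hv'
  set l' := l.rotate (m+1) with hl'def
  have hl'c : IsCycList G l' := hl.rotate (m+1)
  have hlen : l'.length = l.length := List.length_rotate l (m+1)
  have h3 := hl'c.three_le
  have hlne : l' ≠ [] := hl'c.ne_nil
  have hlast : l'.getLast hlne = s := (rotate_getLast hm hlne).trans h1
  have hhead : l'.head hlne = z := (rotate_head hm hlne).trans h2
  have hnew : IsCycList G (l' ++ P) := by
    refine ⟨?_, ?_, ?_, ?_⟩
    · refine List.Nodup.append hl'c.nodup hPnd ?_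
      intro a ha haP
      exact hPl a haP (List.mem_rotate.1 ha)
    · rw [List.length_append]; omega
    · rw [List.Chain', List.isChain_append]
      refine ⟨hl'c.chain, hPch, ?_⟩
      intro a ha b hb
      rw [List.getLast?_eq_getLast hlne, Option.mem_def, Option.some_inj] at ha
      rw [hPhd, Option.mem_def, Option.some_inj] at hb
      subst ha; subst hb
      rw [hlast]; exact hsv
    · intro a ha b hb
      rw [List.getLast?_append_of_ne_nil _ hPne, hPlast, Option.mem_def,
        Option.some_inj] at ha
      rw [List.head?_append_of_ne_nil _ hlne, List.head?_eq_head hlne,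
        Option.mem_def, Option.some_inj] at hb
      subst ha; subst hb
      rw [hhead]; exact hzv'.symm
  have hle := hmax _ hnew
  rw [List.length_append, hlen] at hle
  have hp0 : 0 < P.length := List.length_pos_iff.2 hPne
  omega

lemma surgery2 [DecidableEq V] (hl : IsCycList G l)
    (hmax : ∀ l', IsCycList G l' → l'.length ≤ l.length)
    {s t z y vs vt u : V} (hst : s ≠ t)
    (hsz : SuccRel l s z) (hty : SuccRel l t y)
    (hvs : vs ∈ Hset G l u) (hvt : vt ∈ Hset G l u)
    (hsvs : G.Adj s vs) (htvt : G.Adj t vt) (hzy : G.Adj z y) : False := by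
  obtain ⟨m, hm, h1, h2⟩ := hsz
  set l' := l.rotate (m+1) with hl'def
  have hl'c : IsCycList G l' := hl.rotate (m+1)
  have hlen : l'.length = l.length := List.length_rotate l (m+1)
  have h3 := hl'c.three_le
  have hlne : l' ≠ [] := hl'c.ne_nil
  have hlast : l'.getLast hlne = s := (rotate_getLast hm hlne).trans h1
  have hhead : l'.head hlne = z := (rotate_head hm hlne).trans h2
  have hlastE : l'[l'.length - 1]'(by omega) = s := by
    rw [← List.getLast_eq_getElem]; exact hlast
  have hty' : SuccRel l' t y := hty.rotate (m+1)
  obtain ⟨j, hj, g1, g2⟩ := hty'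
  have hjne : j ≠ l'.length - 1 := by
    intro he
    subst he
    exact hst (hlastE.symm.trans g1)
  have hj1 : j + 1 < l'.length := by omega
  have g2' : l'[j+1]'hj1 = y := by
    have hmod : (j+1) % l'.length = j + 1 := Nat.mod_eq_of_lt hj1
    simp only [hmod] at g2
    exact g2
  set A := l'.take (j+1) with hA
  set B := l'.drop (j+1) with hB
  have hAlen : A.length = j + 1 := by rw [hA, List.length_take]; omega
  have hBlen : B.length = l'.length - (j+1) := by rw [hB, List.length_drop]
  have hAne : A ≠ [] := List.ne_nil_of_length_pos (by omega)
  have hBne : B ≠ [] := List.ne_nil_of_length_pos (by omega)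
  have hAhd : A.head hAne = z := by
    rw [List.head_eq_getElem_zero hAne]
    have e1 : A[0]'(by omega) = l'[0]'(by omega) := List.getElem_take
    refine e1.trans ?_
    rw [← List.head_eq_getElem_zero hlne]
    exact hhead
  have hAlast : A.getLast hAne = t := by
    rw [List.getLast_eq_getElem]
    simp only [hAlen, Nat.add_sub_cancel]
    exact (List.getElem_take).trans g1
  have hBhd : B.head hBne = y := by
    rw [List.head_eq_getElem_zero hBne]
    have e1 : B[0]'(by omega) = l'[j+1+0]'(by omega) := List.getElem_drop
    refine e1.trans ?_
    simp only [Nat.add_zero]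
    exact g2'
  have hBlast : B.getLast hBne = s := by
    rw [List.getLast_eq_getElem]
    have e1 : B[B.length - 1]'(by omega) = l'[j+1+(B.length-1)]'(by omega) :=
      List.getElem_drop
    refine e1.trans ?_
    have hidx : j + 1 + (B.length - 1) = l'.length - 1 := by omega
    simp only [hidx]
    exact hlastE
  obtain ⟨P, hPne, hPnd, hPch, hPhd, hPlast, hPl⟩ := Hset.exists_path hvs hvt
  have hAB : A ++ B = l' := List.take_append_drop _ _
  have hmemA : ∀ a ∈ A, a ∈ l := fun a ha =>
    List.mem_rotate.1 (hAB ▸ List.mem_append_left B ha)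
  have hmemB : ∀ a ∈ B, a ∈ l := fun a ha =>
    List.mem_rotate.1 (hAB ▸ List.mem_append_right A ha)
  have h4 : (A ++ B).Nodup := hAB ▸ hl'c.nodup
  rw [List.nodup_append] at h4
  have hBPne : B ++ P ≠ [] := by
    intro he
    rw [List.append_eq_nil_iff] at he
    exact hBne he.1
  have hnew : IsCycList G (A.reverse ++ (B ++ P)) := by
    refine ⟨?_, ?_, ?_, ?_⟩
    · refine List.Nodup.append (List.nodup_reverse.2 h4.1)
        (List.Nodup.append h4.2.1 hPnd ?_) ?_
      · intro a ha haP
        exact hPl a haP (hmemB a ha)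
      · intro a ha haBP
        rw [List.mem_reverse] at ha
        rw [List.mem_append] at haBP
        rcases haBP with hb | hb
        · exact h4.2.2 _ ha _ hb rfl
        · exact hPl a hb (hmemA a ha)
    · rw [List.length_append, List.length_append, List.length_reverse]; omega
    · rw [List.Chain', List.isChain_append]
      refine ⟨?_, ?_, ?_⟩
      · rw [List.isChain_reverse]
        exact List.IsChain.imp (fun a b hab => hab.symm) (List.IsChain.take hl'c.chain _)
      · rw [List.isChain_append]
        refine ⟨List.IsChain.drop hl'c.chain _, hPch, ?_⟩
        intro a ha b hb
        rw [List.getLast?_eq_getLast hBne, Option.mem_def, Option.some_inj] at ha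
        rw [hPhd, Option.mem_def, Option.some_inj] at hb
        subst ha; subst hb
        rw [hBlast]; exact hsvs
      · intro a ha b hb
        rw [List.getLast?_reverse, List.head?_eq_head hAne, Option.mem_def,
          Option.some_inj] at ha
        rw [List.head?_append_of_ne_nil _ hBne, List.head?_eq_head hBne,
          Option.mem_def, Option.some_inj] at hb
        subst ha; subst hb
        rw [hAhd, hBhd]; exact hzy
    · intro a ha b hb
      rw [List.getLast?_append_of_ne_nil _ hBPne,
        List.getLast?_append_of_ne_nil _ hPne, hPlast, Option.mem_def,
        Option.some_inj] at ha
      rw [List.head?_append_of_ne_nil _ (by simpa using hAne), List.head?_reverse,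
        List.getLast?_eq_getLast hAne, Option.mem_def, Option.some_inj] at hb
      subst ha; subst hb
      rw [hAlast]; exact htvt.symm
  have hle := hmax _ hnew
  rw [List.length_append, List.length_append, List.length_reverse] at hle
  have hp0 : 0 < P.length := List.length_pos_iff.2 hPne
  omega
/-! ### Existence of a cycle under min degree 2 -/

lemma exists_isCycList [Fintype V] [DecidableEq V] [Nonempty V]
    (hdeg : ∀ v : V, ∃ y₁ y₂ : V, y₁ ≠ y₂ ∧ G.Adj v y₁ ∧ G.Adj v y₂) :
    ∃ l, IsCycList G l := by
  set PL : Set ℕ := {k | ∃ (a b : V) (p : G.Walk a b), p.IsPath ∧ p.length = k} with hPL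
  have hne : PL.Nonempty :=
    ⟨0, Classical.arbitrary V, Classical.arbitrary V, Walk.nil, Walk.IsPath.nil, rfl⟩
  have hbdd : BddAbove PL := by
    refine ⟨Fintype.card V, ?_⟩
    rintro k ⟨a, b, p, hp, hlen⟩
    exact hlen ▸ hp.length_lt.le
  obtain ⟨a, b, p, hp, hlen⟩ := Nat.sSup_mem hne hbdd
  have hnb : ∀ y, G.Adj a y → y ∈ p.support := by
    intro y hy
    by_contra hyn
    have hpath : (Walk.cons hy.symm p).IsPath := hp.cons hyn
    have hle : (Walk.cons hy.symm p).length ≤ sSup PL := le_csSup hbdd ⟨y, b, _, hpath, rfl⟩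
    rw [Walk.length_cons, hlen] at hle
    omega
  obtain ⟨y1, y2, hne12, hy1, hy2⟩ := hdeg a
  obtain ⟨x, hx, hxne⟩ : ∃ x, G.Adj a x ∧ some x ≠ p.support[1]? := by
    by_cases hc : some y1 = p.support[1]?
    · refine ⟨y2, hy2, ?_⟩
      rw [← hc]
      simp only [ne_eq, Option.some_inj]
      exact fun he => hne12 he.symm
    · exact ⟨y1, hy1, hc⟩
  have hxs : x ∈ p.support := hnb x hx
  have hqpath : (p.takeUntil x hxs).IsPath := hp.takeUntil hxs
  have hedge : s(x, a) ∉ (p.takeUntil x hxs).edges := by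
    intro he
    exact hxne (support_getElem?_one_of_edge hp.support_nodup
      (p.edges_takeUntil_subset hxs he)).symm
  have hcyc : (Walk.cons hx.symm (p.takeUntil x hxs)).IsCycle :=
    (Walk.cons_isCycle_iff (p.takeUntil x hxs) hx.symm).2 ⟨hqpath, hedge⟩
  exact ⟨_, isCycList_support_tail hcyc⟩

/-! ### Walks in induced subgraphs -/

lemma induce_walk_support {s : Set V} {a b : s} (w : (G.induce s).Walk a b) :
    ∃ W : G.Walk a b, ∀ x ∈ W.support, x ∈ s := by
  refine ⟨w.map (SimpleGraph.Embedding.induce s).toHom, ?_⟩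
  intro x hx
  replace hx : x ∈ List.map (SimpleGraph.Embedding.induce (G := G) s).toHom w.support := by
    rw [← Walk.support_map]; exact hx
  rw [List.mem_map] at hx
  obtain ⟨y, _, hyx⟩ := hx
  exact hyx ▸ y.2
/-! ### Bounds on the invariants -/

section Bounds
variable [Fintype V] [DecidableEq V]

lemma indep_card_le {A : Finset V}
    (hA : (A : Set V).Pairwise (fun a b => ¬ G.Adj a b)) : A.card ≤ _root_.indepNum G := by
  apply le_csSup
  · refine ⟨Fintype.card V, ?_⟩
    rintro k ⟨s, _, rfl⟩
    exact s.card_le_univ.trans (le_of_eq Finset.card_univ)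
  · exact ⟨A, hA, rfl⟩

lemma vcSet_nonempty : {k | ∃ S : Finset V, S.card = k ∧
    ((Sᶜ : Finset V).card ≤ 1 ∨ ¬ (G.induce ((Sᶜ : Finset V) : Set V)).Connected)}.Nonempty :=
  ⟨(univ : Finset V).card, univ, rfl, Or.inl (by simp)⟩

lemma vc_le {S : Finset V}
    (hor : (Sᶜ : Finset V).card ≤ 1 ∨ ¬ (G.induce ((Sᶜ : Finset V) : Set V)).Connected) :
    vertexConnectivity G ≤ S.card :=
  Nat.sInf_le ⟨S, rfl, hor⟩

lemma two_le_vc (hn : 3 ≤ Fintype.card V) (h : _root_.indepNum G ≤ vertexConnectivity G) :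
    2 ≤ vertexConnectivity G := by
  classical
  by_cases hcomp : ∀ a b : V, a ≠ b → G.Adj a b
  · refine le_csInf vcSet_nonempty ?_
    rintro k ⟨S, rfl, hor⟩
    have hSc := Finset.card_compl S
    have hSu : S.card ≤ Fintype.card V := by
      simpa using S.card_le_univ
    rcases hor with h1 | h1
    · omega
    · by_contra hlt
      apply h1
      haveI : Nonempty ((Sᶜ : Finset V) : Set V) := by
        obtain ⟨x, hx⟩ := Finset.card_pos.1 (by omega : 0 < (Sᶜ : Finset V).card)
        exact ⟨⟨x, by exact_mod_cast hx⟩⟩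
      refine ⟨fun x y => ?_⟩
      by_cases hxy : x = y
      · exact hxy ▸ Reachable.refl x
      · exact Adj.reachable (hcomp _ _ (fun he => hxy (Subtype.ext he)))
  · push_neg at hcomp
    obtain ⟨a, b, hab, hnadj⟩ := hcomp
    refine le_trans ?_ h
    have hp2 : ({a, b} : Finset V).card = 2 := Finset.card_pair hab
    rw [← hp2]
    apply indep_card_le
    intro x hx y hy hxy
    simp only [Finset.coe_insert, Finset.coe_singleton, Set.mem_insert_iff,
      Set.mem_singleton_iff] at hx hy
    rcases hx with rfl | rfl <;> rcases hy with rfl | rfl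
    · exact absurd rfl hxy
    · exact hnadj
    · exact fun hadj => hnadj hadj.symm
    · exact absurd rfl hxy

lemma connected_of_vc (hn : 3 ≤ Fintype.card V) (h2 : 2 ≤ vertexConnectivity G) :
    G.Connected := by
  haveI : Nonempty V := by rw [← Fintype.card_pos_iff]; omega
  by_contra hnc
  have h0 : vertexConnectivity G ≤ (∅ : Finset V).card := by
    refine vc_le (Or.inr ?_)
    intro hC
    apply hnc
    refine ⟨fun x y => ?_⟩
    have hx : x ∈ (((∅ : Finset V)ᶜ : Finset V) : Set V) := by simp
    have hy : y ∈ (((∅ : Finset V)ᶜ : Finset V) : Set V) := by simp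
    obtain ⟨w⟩ := hC.preconnected ⟨x, hx⟩ ⟨y, hy⟩
    obtain ⟨W, _⟩ := induce_walk_support w
    exact ⟨W⟩
  rw [Finset.card_empty] at h0
  omega

lemma two_le_degree (h2 : 2 ≤ vertexConnectivity G) (hn : 3 ≤ Fintype.card V) (v : V) :
    ∃ y₁ y₂ : V, y₁ ≠ y₂ ∧ G.Adj v y₁ ∧ G.Adj v y₂ := by
  classical
  set N : Finset V := univ.filter (fun y => G.Adj v y) with hN
  have hmem : ∀ y, y ∈ N ↔ G.Adj v y := by simp [hN]
  suffices hcard : 2 ≤ N.card by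
    obtain ⟨y1, hy1, y2, hy2, hne⟩ := Finset.one_lt_card.1 (by omega : 1 < N.card)
    exact ⟨y1, y2, hne, (hmem y1).1 hy1, (hmem y2).1 hy2⟩
  by_cases hc : (Nᶜ : Finset V).card ≤ 1
  · have h5 := Finset.card_compl N
    have h6 : N.card ≤ Fintype.card V := by simpa using N.card_le_univ
    omega
  · have hvN : v ∈ (Nᶜ : Finset V) := by
      rw [Finset.mem_compl, hmem]
      exact fun hadj => hadj.ne rfl
    obtain ⟨z, hz, hzv⟩ := Finset.exists_mem_ne (by omega : 1 < (Nᶜ : Finset V).card) v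
    have hdis : ¬ (G.induce ((Nᶜ : Finset V) : Set V)).Connected := by
      intro hC
      obtain ⟨w⟩ := hC.preconnected ⟨v, by exact_mod_cast hvN⟩ ⟨z, by exact_mod_cast hz⟩
      obtain ⟨W, hWs⟩ := induce_walk_support w
      cases W with
      | nil => exact hzv rfl
      | @cons _ c _ hadj q =>
        have hcs : c ∈ (((Nᶜ : Finset V)) : Set V) := hWs c (by simp [Walk.support_cons])
        rw [Finset.mem_coe, Finset.mem_compl, hmem] at hcs
        exact hcs hadj
    have := vc_le (S := N) (Or.inr hdis)
    omega

end Bounds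
end ChvatalErdos

open ChvatalErdos

/-- **Chvátal–Erdős theorem.** Every graph on at least 3 vertices whose vertex
connectivity is at least its independence number is Hamiltonian. -/
theorem chvatal_erdos {V : Type*} [Fintype V] [DecidableEq V] (G : SimpleGraph V)
    (hn : 3 ≤ Fintype.card V) (h : _root_.indepNum G ≤ vertexConnectivity G) :
    G.IsHamiltonian := by
  classical
  intro _hcard1
  haveI : Nonempty V := by rw [← Fintype.card_pos_iff]; omega
  have hVC2 : 2 ≤ vertexConnectivity G := two_le_vc hn h
  have hconn : G.Connected := connected_of_vc hn hVC2
  have hdeg : ∀ v : V, ∃ y₁ y₂ : V, y₁ ≠ y₂ ∧ G.Adj v y₁ ∧ G.Adj v y₂ :=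
    two_le_degree hVC2 hn
  obtain ⟨l0, hl0⟩ := exists_isCycList hdeg
  set CL : Set ℕ := {k | ∃ l, IsCycList G l ∧ l.length = k} with hCL
  have hCLne : CL.Nonempty := ⟨l0.length, l0, hl0, rfl⟩
  have hCLbdd : BddAbove CL := by
    refine ⟨Fintype.card V, ?_⟩
    rintro k ⟨l, hl, rfl⟩
    exact hl.nodup.length_le_card
  obtain ⟨l, hl, hLeq⟩ := Nat.sSup_mem hCLne hCLbdd
  have hmax : ∀ l', IsCycList G l' → l'.length ≤ l.length := by
    intro l' hl'
    rw [hLeq]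
    exact le_csSup hCLbdd ⟨l', hl', rfl⟩
  by_cases hall : ∀ v : V, v ∈ l
  · exact hl.isHamiltonianCycle hall
  · exfalso
    push_neg at hall
    obtain ⟨u, hu⟩ := hall
    have huH : u ∈ Hset G l u := Hset.self_mem hu
    set S : Finset V := univ.filter (fun w => w ∈ l ∧ ∃ v, v ∈ Hset G l u ∧ G.Adj w v)
      with hS
    have hSmem : ∀ w, w ∈ S ↔ (w ∈ l ∧ ∃ v, v ∈ Hset G l u ∧ G.Adj w v) := by
      intro w; simp [hS]
    have hSl : ∀ w ∈ S, w ∈ l := fun w hw => ((hSmem w).1 hw).1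
    -- S is nonempty
    have first_hit : ∀ {a b : V} (W : G.Walk a b), a ∈ Hset G l u → b ∈ l →
        ∃ w, w ∈ S := by
      intro a b W
      induction W with
      | nil => intro ha hb; exact absurd hb (Hset.not_mem_list ha)
      | @cons a c b hadj W ih =>
        intro ha hb
        by_cases hcl : c ∈ l
        · exact ⟨c, (hSmem c).2 ⟨hcl, a, ha, hadj.symm⟩⟩
        · exact ih (Hset.extend ha hadj hcl) hb
    obtain ⟨s0, hs0⟩ : ∃ w, w ∈ S := by
      obtain ⟨x0, hx0⟩ := List.exists_mem_of_ne_nil l hl.ne_nil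
      obtain ⟨W⟩ := hconn.preconnected u x0
      exact first_hit W huH hx0
    -- the successor map
    have hL0 : 0 < l.length := hl.pos
    set σ : V → V := fun w => l[(l.idxOf w + 1) % l.length]'(Nat.mod_lt _ hL0) with hσ
    have hσrel : ∀ w ∈ l, SuccRel l w (σ w) := by
      intro w hw
      refine ⟨l.idxOf w, List.idxOf_lt_length_iff.2 hw, ?_, rfl⟩
      exact List.getElem_idxOf (List.idxOf_lt_length_iff.2 hw)
    have claim_a : ∀ s ∈ S, ∀ v', v' ∈ Hset G l u → ¬ G.Adj (σ s) v' := by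
      intro s hs v' hv' hadj
      obtain ⟨hsl, v, hvH, hsv⟩ := (hSmem s).1 hs
      exact surgery1 hl hmax (hσrel s hsl) hvH hv' hsv hadj
    have claim_b : ∀ s ∈ S, ∀ t ∈ S, s ≠ t → ¬ G.Adj (σ s) (σ t) := by
      intro s hs t ht hst hadj
      obtain ⟨hsl, vs, hvsH, hsvs⟩ := (hSmem s).1 hs
      obtain ⟨htl, vt, hvtH, htvt⟩ := (hSmem t).1 ht
      exact surgery2 hl hmax hst (hσrel s hsl) (hσrel t htl) hvsH hvtH hsvs htvt hadj
    have hσl : ∀ s ∈ S, σ s ∈ l := fun s hs => (hσrel s (hSl s hs)).mem_right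
    have hσS : ∀ s ∈ S, σ s ∉ S := by
      intro s hs hσs
      obtain ⟨_, v, hvH, hadj⟩ := (hSmem (σ s)).1 hσs
      exact claim_a s hs v hvH hadj
    -- walks avoiding S starting in the component stay in the component
    have stay : ∀ {a b : V} (W : G.Walk a b), a ∈ Hset G l u →
        (∀ x ∈ W.support, x ∉ S) → b ∈ Hset G l u := by
      intro a b W
      induction W with
      | nil => intro ha _; exact ha
      | @cons a c b hadj W ih =>
        intro ha hSx
        by_cases hcl : c ∈ l
        · exact absurd ((hSmem c).2 ⟨hcl, a, ha, hadj.symm⟩)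
            (hSx c (by simp [Walk.support_cons]))
        · exact ih (Hset.extend ha hadj hcl)
            (fun x hx => hSx x (by rw [Walk.support_cons]; exact List.mem_cons_of_mem _ hx))
    -- vertex connectivity is at most |S|
    have hVCS : vertexConnectivity G ≤ S.card := by
      refine vc_le (Or.inr ?_)
      intro hC
      have huc : u ∈ ((Sᶜ : Finset V) : Set V) := by
        rw [Finset.mem_coe, Finset.mem_compl]
        exact fun huS => hu (hSl u huS)
      have hzc : σ s0 ∈ ((Sᶜ : Finset V) : Set V) := by
        rw [Finset.mem_coe, Finset.mem_compl]
        exact hσS s0 hs0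
      obtain ⟨w⟩ := hC.preconnected ⟨u, huc⟩ ⟨σ s0, hzc⟩
      obtain ⟨W, hWs⟩ := induce_walk_support w
      have hmemH : σ s0 ∈ Hset G l u := by
        refine stay W huH ?_
        intro x hx
        have := hWs x hx
        rw [Finset.mem_coe, Finset.mem_compl] at this
        exact this
      exact (Hset.not_mem_list hmemH) (hσl s0 hs0)
    -- the independent set
    set A : Finset V := S.image σ ∪ {u} with hA
    have hcardA : A.card = S.card + 1 := by
      rw [hA, Finset.card_union_of_disjoint, Finset.card_singleton]
      · congr 1
        apply Finset.card_image_of_injOn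
        intro s hs t ht he
        rw [Finset.mem_coe] at hs ht
        refine SuccRel.inj hl.nodup (hσrel s (hSl s hs)) ?_
        rw [he]
        exact hσrel t (hSl t ht)
      · rw [Finset.disjoint_singleton_right]
        intro huim
        obtain ⟨s, hs, he⟩ := Finset.mem_image.1 huim
        exact hu (he ▸ hσl s hs)
    have hpair : (A : Set V).Pairwise (fun a b => ¬ G.Adj a b) := by
      intro x hx y hy hxy
      rw [Finset.coe_union, Finset.coe_image, Finset.coe_singleton] at hx hy
      rcases hx with ⟨s, hs, rfl⟩ | hxu <;> rcases hy with ⟨t, ht, rfl⟩ | hyu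
      · rw [Finset.mem_coe] at hs ht
        refine claim_b s hs t ht ?_
        rintro rfl; exact hxy rfl
      · rw [Finset.mem_coe] at hs
        rw [Set.mem_singleton_iff] at hyu
        rw [hyu]
        exact claim_a s hs u huH
      · rw [Finset.mem_coe] at ht
        rw [Set.mem_singleton_iff] at hxu
        rw [hxu]
        exact fun hadj => claim_a t ht u huH hadj.symm
      · rw [Set.mem_singleton_iff] at hxu hyu
        exact absurd (hxu.trans hyu.symm) hxy
    have hαA : A.card ≤ _root_.indepNum G := indep_card_le hpair
    omega
end

section
/- Let G be an n-vertex graph with κ(G) > α(G). Then there exists a vertex subset X ⊆ V(G) and a set E of edges of the induced subgraph G[X] such that |E| ≥ (κ(G) − α(G))·n/8 and for every edge xy ∈ E there is a vertex z ∈ V(G) \ X with xz, yz ∈ E(G) (so xyz is a triangle with apex outside X). -/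
open SimpleGraph Finset

section Aux
variable {V : Type*} [Fintype V] [DecidableEq V] (G : SimpleGraph V) [DecidableRel G.Adj]

lemma aux_indep_le (s : Finset V) (hs : (s : Set V).Pairwise (fun a b => ¬ G.Adj a b)) :
    s.card ≤ _root_.indepNum G := by
  apply le_csSup
  · exact ⟨Fintype.card V, fun k ⟨t, _, ht⟩ => ht ▸ (t.card_le_univ.trans_eq (Finset.card_univ))⟩
  · exact ⟨s, hs, rfl⟩

lemma aux_not_reachable {W : Type*} (H : SimpleGraph W) (a b : W) (hne : a ≠ b)
    (hiso : ∀ c, ¬ H.Adj a c) : ¬ H.Reachable a b := by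
  rintro ⟨w⟩
  cases w with
  | nil => exact hne rfl
  | cons hadj _ => exact hiso _ hadj

lemma aux_conn_le_degree (u : V) : vertexConnectivity G ≤ G.degree u := by
  apply Nat.sInf_le
  refine ⟨G.neighborFinset u, G.card_neighborFinset_eq_degree u, ?_⟩
  by_cases hc : ((G.neighborFinset u)ᶜ : Finset V).card ≤ 1
  · exact Or.inl hc
  · right
    intro hcon
    have hu : u ∈ ((G.neighborFinset u)ᶜ : Finset V) := by
      simp [Finset.mem_compl]
    obtain ⟨x, hx, hxu⟩ := Finset.exists_mem_ne (not_le.mp hc) u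
    have hreach := hcon.preconnected ⟨u, by exact_mod_cast hu⟩ ⟨x, by exact_mod_cast hx⟩
    refine aux_not_reachable _ _ _ ?_ ?_ hreach
    · intro he
      exact hxu (congrArg Subtype.val he.symm)
    · rintro ⟨c, hcmem⟩ hadj
      have : G.Adj u c := hadj
      have hc' : c ∈ ((G.neighborFinset u)ᶜ : Finset V) := by exact_mod_cast hcmem
      rw [Finset.mem_compl] at hc'
      exact hc' (by simpa [SimpleGraph.mem_neighborFinset] using this)

lemma aux_caro_wei (S : Finset V) : ∃ I : Finset V, I ⊆ S ∧
    ((I : Set V).Pairwise fun a b => ¬ G.Adj a b) ∧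
    ∑ w ∈ S, ((2:ℝ) ^ (S ∩ G.neighborFinset w).card)⁻¹ ≤ I.card := by
  induction S using Finset.strongInduction with
  | _ S ih =>
    rcases S.eq_empty_or_nonempty with rfl | hne
    · exact ⟨∅, Finset.Subset.refl _, by simp, by simp⟩
    obtain ⟨w₀, hw₀S, hmin⟩ :=
      Finset.exists_min_image S (fun w => (S ∩ G.neighborFinset w).card) hne
    set D : Finset V := S ∩ G.neighborFinset w₀ with hD
    set R : Finset V := insert w₀ D with hR
    have hw₀D : w₀ ∉ D := by
      simp [hD, SimpleGraph.mem_neighborFinset]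
    have hRS : R ⊆ S := by
      rw [hR]
      exact Finset.insert_subset hw₀S (Finset.inter_subset_left)
    have hSS : S \ R ⊂ S := Finset.sdiff_ssubset hRS ⟨w₀, Finset.mem_insert_self _ _⟩
    obtain ⟨I', hI'sub, hI'pair, hI'sum⟩ := ih (S \ R) hSS
    have hw₀I' : w₀ ∉ I' := fun hmem => by
      have := hI'sub hmem
      simp [hR] at this
    refine ⟨insert w₀ I', ?_, ?_, ?_⟩
    · exact Finset.insert_subset hw₀S (hI'sub.trans (Finset.sdiff_subset))
    · rw [Finset.coe_insert]
      haveI : Std.Symm (fun a b : V => ¬ G.Adj a b) := ⟨fun a b hab h => hab h.symm⟩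
      rw [Set.pairwise_insert_of_symm_of_notMem (by exact_mod_cast hw₀I')]
      refine ⟨hI'pair, fun b hb => ?_⟩
      intro hadj
      have hb' : b ∈ S \ R := hI'sub (by exact_mod_cast hb)
      rw [Finset.mem_sdiff] at hb'
      apply hb'.2
      rw [hR]
      refine Finset.mem_insert_of_mem ?_
      rw [hD, Finset.mem_inter]
      exact ⟨hb'.1, by simpa [SimpleGraph.mem_neighborFinset] using hadj⟩
    · -- the sum bound
      have hcard : (insert w₀ I').card = I'.card + 1 := Finset.card_insert_of_notMem hw₀I'
      rw [← Finset.sum_sdiff hRS]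
      have h1 : ∑ w ∈ S \ R, ((2:ℝ) ^ (S ∩ G.neighborFinset w).card)⁻¹ ≤ I'.card := by
        refine le_trans (Finset.sum_le_sum ?_) hI'sum
        intro w hw
        apply inv_anti₀
        · positivity
        · apply pow_le_pow_right₀ (by norm_num)
          exact Finset.card_le_card (Finset.inter_subset_inter_right (Finset.sdiff_subset))
      have h2 : ∑ w ∈ R, ((2:ℝ) ^ (S ∩ G.neighborFinset w).card)⁻¹ ≤ 1 := by
        have hRcard : R.card = D.card + 1 := Finset.card_insert_of_notMem hw₀D
        have hterm : ∀ w ∈ R, ((2:ℝ) ^ (S ∩ G.neighborFinset w).card)⁻¹ ≤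
            ((2:ℝ) ^ D.card)⁻¹ := by
          intro w hw
          apply inv_anti₀
          · positivity
          · apply pow_le_pow_right₀ (by norm_num)
            exact hmin w (hRS hw)
        calc ∑ w ∈ R, ((2:ℝ) ^ (S ∩ G.neighborFinset w).card)⁻¹
            ≤ ∑ _w ∈ R, ((2:ℝ) ^ D.card)⁻¹ := Finset.sum_le_sum hterm
          _ = (D.card + 1) * ((2:ℝ) ^ D.card)⁻¹ := by
              rw [Finset.sum_const, hRcard]; push_cast; ring
          _ ≤ 1 := by
              rw [mul_inv_le_iff₀' (by positivity), mul_one]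
              exact_mod_cast Nat.lt_two_pow_self (n := D.card)
      rw [hcard]
      push_cast
      linarith

lemma aux_card_powerset_filter (A : Finset V) :
    ((Finset.univ : Finset V).powerset.filter fun X => A ⊆ X).card
      = 2 ^ (Fintype.card V - A.card) := by
  have h1 : ((Finset.univ : Finset V) \ A).powerset.card = 2 ^ (Fintype.card V - A.card) := by
    rw [Finset.card_powerset, Finset.card_sdiff_of_subset (Finset.subset_univ A), Finset.card_univ]
  rw [← h1]
  apply Finset.card_nbij' (fun X => X \ A) (fun Y => Y ∪ A)
  · intro X hX
    simp only [Finset.mem_coe, Finset.mem_filter, Finset.mem_powerset] at hX ⊢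
    exact Finset.sdiff_subset_sdiff (Finset.subset_univ X) (Finset.Subset.refl A)
  · intro Y hY
    simp only [Finset.mem_coe, Finset.mem_filter, Finset.mem_powerset] at hY ⊢
    exact ⟨Finset.subset_univ _, Finset.subset_union_right⟩
  · intro X hX
    simp only [Finset.mem_coe, Finset.mem_filter, Finset.mem_powerset] at hX
    exact Finset.sdiff_union_of_subset hX.2
  · intro Y hY
    simp only [Finset.mem_coe, Finset.mem_powerset] at hY
    have : Disjoint Y A := Finset.disjoint_left.mpr fun a haY haA => by
      have := hY haY
      simp [Finset.mem_sdiff] at this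
      exact this haA
    exact Finset.union_sdiff_cancel_right this

set_option maxHeartbeats 1000000 in
lemma aux_pair_count (u w : V) (huw : G.Adj u w) :
    ((Finset.univ : Finset V).powerset.filter fun X => u ∈ X ∧ w ∈ X ∧
        ¬ (G.neighborFinset u ∩ G.neighborFinset w) ⊆ X).card
      = 2 ^ (Fintype.card V - 2)
        - 2 ^ (Fintype.card V - (2 + (G.neighborFinset u ∩ G.neighborFinset w).card)) := by
  set C := G.neighborFinset u ∩ G.neighborFinset w with hC
  set A : Finset V := insert u {w} with hA
  have hune : u ≠ w := G.ne_of_adj huw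
  have hAcard : A.card = 2 := by
    rw [hA, Finset.card_insert_of_notMem (by simp [hune]), Finset.card_singleton]
  have hdisj : Disjoint A C := by
    rw [Finset.disjoint_left]
    intro a haA haC
    rw [hC, Finset.mem_inter, SimpleGraph.mem_neighborFinset, SimpleGraph.mem_neighborFinset]
      at haC
    rw [hA] at haA
    simp only [Finset.mem_insert, Finset.mem_singleton] at haA
    rcases haA with rfl | rfl
    · exact G.irrefl haC.1
    · exact G.irrefl haC.2
  have hBcard : (A ∪ C).card = 2 + C.card := by
    rw [Finset.card_union_of_disjoint hdisj, hAcard]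
  have hfe : ((Finset.univ : Finset V).powerset.filter fun X => u ∈ X ∧ w ∈ X ∧ ¬ C ⊆ X)
      = ((Finset.univ : Finset V).powerset.filter fun X => A ⊆ X)
        \ ((Finset.univ : Finset V).powerset.filter fun X => A ∪ C ⊆ X) := by
    ext X
    simp only [Finset.mem_filter, Finset.mem_sdiff, Finset.mem_powerset, hA,
      Finset.insert_subset_iff, Finset.singleton_subset_iff, Finset.union_subset_iff]
    tauto
  have hsub : ((Finset.univ : Finset V).powerset.filter fun X => A ∪ C ⊆ X)
      ⊆ ((Finset.univ : Finset V).powerset.filter fun X => A ⊆ X) := by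
    apply Finset.monotone_filter_right
    intro X _ hX
    exact (Finset.subset_union_left).trans hX
  rw [hfe, Finset.card_sdiff_of_subset hsub, aux_card_powerset_filter A,
    aux_card_powerset_filter (A ∪ C), hAcard, hBcard]

lemma aux_two_add_card_le (u w : V) (huw : G.Adj u w) :
    2 + (G.neighborFinset u ∩ G.neighborFinset w).card ≤ Fintype.card V := by
  set C := G.neighborFinset u ∩ G.neighborFinset w with hC
  set A : Finset V := insert u {w} with hA
  have hune : u ≠ w := G.ne_of_adj huw
  have hAcard : A.card = 2 := by
    rw [hA, Finset.card_insert_of_notMem (by simp [hune]), Finset.card_singleton]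
  have hdisj : Disjoint A C := by
    rw [Finset.disjoint_left]
    intro a haA haC
    rw [hC, Finset.mem_inter, SimpleGraph.mem_neighborFinset, SimpleGraph.mem_neighborFinset]
      at haC
    rw [hA] at haA
    simp only [Finset.mem_insert, Finset.mem_singleton] at haA
    rcases haA with rfl | rfl
    · exact G.irrefl haC.1
    · exact G.irrefl haC.2
  calc 2 + C.card = (A ∪ C).card := by rw [Finset.card_union_of_disjoint hdisj, hAcard]
    _ ≤ (Finset.univ : Finset V).card := Finset.card_le_univ _
    _ = Fintype.card V := Finset.card_univ

/-- The good ordered pairs for a subset `X`. -/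
def auxGP (X : Finset V) : Finset (V × V) :=
  Finset.univ.filter fun p => G.Adj p.1 p.2 ∧ p.1 ∈ X ∧ p.2 ∈ X ∧
    ¬ (G.neighborFinset p.1 ∩ G.neighborFinset p.2) ⊆ X

/-- The good edges for a subset `X`. -/
def auxE (X : Finset V) : Finset (Sym2 V) :=
  (auxGP G X).image fun p => s(p.1, p.2)

lemma auxGP_card_le (X : Finset V) : (auxGP G X).card ≤ 2 * (auxE G X).card := by
  apply Finset.card_le_mul_card_image
  intro b hb
  obtain ⟨p, hp, rfl⟩ := Finset.mem_image.mp hb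
  have hsub : ((auxGP G X).filter fun a => s(a.1, a.2) = s(p.1, p.2))
      ⊆ insert (p.1, p.2) {(p.2, p.1)} := by
    intro q hq
    have hq2 := (Finset.mem_filter.mp hq).2
    rw [Sym2.eq_iff] at hq2
    simp only [Finset.mem_insert, Finset.mem_singleton]
    rcases hq2 with ⟨h1, h2⟩ | ⟨h1, h2⟩
    · left; exact Prod.ext h1 h2
    · right; exact Prod.ext h1 h2
  calc ((auxGP G X).filter fun a => s(a.1, a.2) = s(p.1, p.2)).card
      ≤ (insert (p.1, p.2) ({(p.2, p.1)} : Finset (V × V))).card := Finset.card_le_card hsub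
    _ ≤ 2 := by
        refine (Finset.card_insert_le _ _).trans ?_
        simp

lemma aux_swap :
    ∑ X ∈ (Finset.univ : Finset V).powerset, (auxGP G X).card
      = ∑ p ∈ (Finset.univ : Finset (V × V)),
          (((Finset.univ : Finset V).powerset).filter fun X => p ∈ auxGP G X).card := by
  have h1 : ∀ X : Finset V, (auxGP G X).card
      = ∑ p ∈ (Finset.univ : Finset (V × V)), if p ∈ auxGP G X then 1 else 0 := by
    intro X
    rw [← Finset.card_filter]
    congr 1
    ext p
    simp [Finset.mem_filter]
  simp_rw [h1, Finset.card_filter]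
  exact Finset.sum_comm

lemma aux_per_u (h : _root_.indepNum G < vertexConnectivity G) (u : V) :
    2 ^ (Fintype.card V - 2) * (vertexConnectivity G - _root_.indepNum G)
      ≤ ∑ w ∈ G.neighborFinset u,
          (((Finset.univ : Finset V).powerset).filter fun X => (u, w) ∈ auxGP G X).card := by
  set n := Fintype.card V with hn
  set m := n - 2 with hm
  set S := G.neighborFinset u with hS
  set t : V → ℕ := fun w => (S ∩ G.neighborFinset w).card with hT
  have hadj : ∀ w ∈ S, G.Adj u w := fun w hw => by
    rwa [hS, SimpleGraph.mem_neighborFinset] at hw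
  have htle : ∀ w ∈ S, t w ≤ m := by
    intro w hw
    have h2 := aux_two_add_card_le G u w (hadj w hw)
    simp only [hT, hS, hm, hn]
    omega
  have hcount : ∀ w ∈ S,
      (((Finset.univ : Finset V).powerset).filter fun X => (u, w) ∈ auxGP G X).card
        = 2 ^ m - 2 ^ (m - t w) := by
    intro w hw
    have hfe : (((Finset.univ : Finset V).powerset).filter fun X => (u, w) ∈ auxGP G X)
        = ((Finset.univ : Finset V).powerset.filter fun X => u ∈ X ∧ w ∈ X ∧
            ¬ (G.neighborFinset u ∩ G.neighborFinset w) ⊆ X) := by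
      ext X
      simp [auxGP, hadj w hw]
    rw [hfe, aux_pair_count G u w (hadj w hw), hm, hn, Nat.sub_sub]
  rw [Finset.sum_congr rfl hcount]
  -- now a real-number computation
  have hterm_le : ∀ w ∈ S, 2 ^ (m - t w) ≤ 2 ^ m := fun w hw =>
    Nat.pow_le_pow_right (by norm_num) (Nat.sub_le _ _)
  rw [← Nat.cast_le (α := ℝ)]
  have hcast : ((∑ w ∈ S, (2 ^ m - 2 ^ (m - t w)) : ℕ) : ℝ)
      = ∑ w ∈ S, ((2:ℝ) ^ m - (2:ℝ) ^ (m - t w)) := by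
    rw [Nat.cast_sum]
    refine Finset.sum_congr rfl fun w hw => ?_
    rw [Nat.cast_sub (hterm_le w hw)]
    push_cast
    ring
  rw [hcast]
  obtain ⟨I, hIsub, hIpair, hIsum⟩ := aux_caro_wei G S
  have hsum_inv : ∑ w ∈ S, ((2:ℝ) ^ t w)⁻¹ ≤ (_root_.indepNum G : ℝ) := by
    refine hIsum.trans ?_
    exact_mod_cast aux_indep_le G I hIpair
  have hdeg : (vertexConnectivity G : ℝ) ≤ (S.card : ℝ) := by
    have := aux_conn_le_degree G u
    rw [← G.card_neighborFinset_eq_degree u] at this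
    exact_mod_cast this
  have hterm : ∀ w ∈ S, (2:ℝ) ^ (m - t w) = (2:ℝ) ^ m * ((2:ℝ) ^ t w)⁻¹ := by
    intro w hw
    rw [eq_mul_inv_iff_mul_eq₀ (by positivity), ← pow_add, Nat.sub_add_cancel (htle w hw)]
  have hmain : (2:ℝ) ^ m * ((vertexConnectivity G : ℝ) - (_root_.indepNum G : ℝ))
      ≤ ∑ w ∈ S, ((2:ℝ) ^ m - (2:ℝ) ^ (m - t w)) := by
    have hrw : ∀ w ∈ S, (2:ℝ) ^ m - (2:ℝ) ^ (m - t w)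
        = (2:ℝ) ^ m * (1 - ((2:ℝ) ^ t w)⁻¹) := fun w hw => by
      rw [hterm w hw]; ring
    rw [Finset.sum_congr rfl hrw, ← Finset.mul_sum]
    apply mul_le_mul_of_nonneg_left _ (by positivity)
    rw [Finset.sum_sub_distrib, Finset.sum_const, nsmul_eq_mul, mul_one]
    linarith
  refine le_trans ?_ hmain
  rw [Nat.cast_mul, Nat.cast_sub h.le]
  norm_num

end Aux

/-- Partitioning lemma: if κ(G) > α(G) then there is a set X of vertices and a set E of
at least (κ(G)−α(G))·n/8 edges inside X such that every edge of E forms a triangle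
with some vertex outside X. -/
theorem partition_lemma {V : Type*} [Fintype V] [DecidableEq V] (G : SimpleGraph V)
    [DecidableRel G.Adj] (h : _root_.indepNum G < vertexConnectivity G) :
    ∃ (X : Finset V) (E : Finset (Sym2 V)), E ⊆ G.edgeFinset ∧
      (∀ e ∈ E, ∀ x ∈ e, x ∈ X) ∧
      ((vertexConnectivity G : ℝ) - _root_.indepNum G) * Fintype.card V / 8 ≤ E.card ∧
      (∀ x y : V, s(x, y) ∈ E → ∃ z ∉ X, G.Adj x z ∧ G.Adj y z) := by
  set n := Fintype.card V with hn
  set k := vertexConnectivity G - _root_.indepNum G with hk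
  have hkpos : 0 < k := Nat.sub_pos_of_lt h
  -- n ≥ 2
  have hn2 : 2 ≤ n := by
    by_contra hcon
    push_neg at hcon
    have h0 : vertexConnectivity G = 0 := by
      have hmem : (0:ℕ) ∈ {k | ∃ S : Finset V, S.card = k ∧
          ((Sᶜ : Finset V).card ≤ 1 ∨ ¬ (G.induce ((Sᶜ : Finset V) : Set V)).Connected)} := by
        refine ⟨∅, Finset.card_empty, Or.inl ?_⟩
        have h1 : ((∅ᶜ : Finset V)).card ≤ Fintype.card V := by
          rw [← Finset.card_univ]
          exact Finset.card_le_univ _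
        rw [← hn] at h1
        omega
      exact Nat.le_zero.mp (Nat.sInf_le hmem)
    omega
  -- total count bound, in ℕ
  have htotal : n * (2 ^ (n - 2) * k)
      ≤ ∑ X ∈ (Finset.univ : Finset V).powerset, (auxGP G X).card := by
    rw [aux_swap G]
    have hsplit : ∑ p ∈ (Finset.univ : Finset (V × V)),
          (((Finset.univ : Finset V).powerset).filter fun X => p ∈ auxGP G X).card
        = ∑ u : V, ∑ w : V,
          (((Finset.univ : Finset V).powerset).filter fun X => (u, w) ∈ auxGP G X).card := by
      rw [← Finset.univ_product_univ, Finset.sum_product]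
    rw [hsplit]
    have hbound : ∀ u : V, 2 ^ (n - 2) * k ≤ ∑ w : V,
        (((Finset.univ : Finset V).powerset).filter fun X => (u, w) ∈ auxGP G X).card := by
      intro u
      refine le_trans (aux_per_u G h u) ?_
      exact Finset.sum_le_sum_of_subset (Finset.subset_univ _)
    calc n * (2 ^ (n - 2) * k) = ∑ _u : V, 2 ^ (n - 2) * k := by
          rw [Finset.sum_const, Finset.card_univ, ← hn, smul_eq_mul]
      _ ≤ _ := Finset.sum_le_sum fun u _ => hbound u
  -- pigeonhole over all subsets
  have hpigeon : ∃ X ∈ (Finset.univ : Finset V).powerset,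
      ((k : ℝ) * n) / 8 ≤ ((auxE G X).card : ℝ) := by
    by_contra hcon
    push_neg at hcon
    have hlt : ∑ X ∈ (Finset.univ : Finset V).powerset, ((auxE G X).card : ℝ)
        < ∑ _X ∈ (Finset.univ : Finset V).powerset, ((k : ℝ) * n) / 8 :=
      Finset.sum_lt_sum_of_nonempty ⟨∅, Finset.mem_powerset.mpr (Finset.empty_subset _)⟩
        fun X hX => hcon X hX
    rw [Finset.sum_const, nsmul_eq_mul, Finset.card_powerset, Finset.card_univ, ← hn] at hlt
    -- lower bound for the sum
    have hge : (n : ℝ) * (2 ^ (n - 2) * k)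
        ≤ 2 * ∑ X ∈ (Finset.univ : Finset V).powerset, ((auxE G X).card : ℝ) := by
      have h1 : (n * (2 ^ (n - 2) * k) : ℕ)
          ≤ ∑ X ∈ (Finset.univ : Finset V).powerset, 2 * (auxE G X).card :=
        le_trans htotal (Finset.sum_le_sum fun X _ => auxGP_card_le G X)
      have := (Nat.cast_le (α := ℝ)).mpr h1
      push_cast at this
      rw [← Finset.mul_sum] at this
      push_cast
      linarith
    have hpow : (2:ℝ) ^ n = 4 * (2:ℝ) ^ (n - 2) := by
      have he : n - 2 + 2 = n := by omega
      calc (2:ℝ) ^ n = (2:ℝ) ^ (n - 2 + 2) := by rw [he]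
        _ = 4 * (2:ℝ) ^ (n - 2) := by rw [pow_add]; ring
    push_cast at hlt
    rw [hpow] at hlt
    linarith [hlt, hge]
  obtain ⟨X, _, hXcard⟩ := hpigeon
  refine ⟨X, auxE G X, ?_, ?_, ?_, ?_⟩
  · -- subset of edgeFinset
    intro e he
    obtain ⟨p, hp, rfl⟩ := Finset.mem_image.mp he
    have hadj : G.Adj p.1 p.2 := ((Finset.mem_filter.mp hp).2).1
    rw [SimpleGraph.mem_edgeFinset]
    exact hadj
  · -- endpoints in X
    intro e he x hx
    obtain ⟨p, hp, rfl⟩ := Finset.mem_image.mp he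
    have hp' := (Finset.mem_filter.mp hp).2
    rw [Sym2.mem_iff] at hx
    rcases hx with rfl | rfl
    · exact hp'.2.1
    · exact hp'.2.2.1
  · -- cardinality bound
    have hcast : ((vertexConnectivity G : ℝ) - _root_.indepNum G) = (k : ℝ) := by
      rw [hk, Nat.cast_sub h.le]
    rw [hcast]
    exact hXcard
  · -- apex outside X
    intro x y hxy
    obtain ⟨p, hp, heq⟩ := Finset.mem_image.mp hxy
    have hp' := (Finset.mem_filter.mp hp).2
    obtain ⟨hadj, hp1, hp2, hnsub⟩ := hp'
    obtain ⟨z, hzC, hzX⟩ := Finset.not_subset.mp hnsub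
    rw [Finset.mem_inter, SimpleGraph.mem_neighborFinset, SimpleGraph.mem_neighborFinset] at hzC
    rw [Sym2.eq_iff] at heq
    rcases heq with ⟨h1, h2⟩ | ⟨h1, h2⟩
    · exact ⟨z, hzX, h1 ▸ hzC.1, h2 ▸ hzC.2⟩
    · exact ⟨z, hzX, h2 ▸ hzC.2, h1 ▸ hzC.1⟩
end

section
/- Every graph G in which every vertex neighbourhood N(v) contains a matching of size at least r, admits a set X ⊆ V(G) and a set E of at least |V(G)|·r/8 edges inside X such that each edge xy ∈ E forms a triangle with some vertex z outside X. -/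
open SimpleGraph Finset

/-- Counting subsets containing `v, x` and avoiding `y`. -/
lemma aux_count_subsets {V : Type*} [Fintype V] [DecidableEq V] {v x y : V}
    (hvx : v ≠ x) (hvy : v ≠ y) (hxy : x ≠ y) :
    2 ^ (Fintype.card V - 3) ≤
      (Finset.univ.filter fun X : Finset V => v ∈ X ∧ x ∈ X ∧ y ∉ X).card := by
  classical
  set C : Finset V := Finset.univ \ {v, x, y} with hCdef
  have hvC : v ∉ C := by simp [hCdef]
  have hxC : x ∉ C := by simp [hCdef]
  have hyC : y ∉ C := by simp [hCdef]
  have hCcard : C.card = Fintype.card V - 3 := by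
    rw [hCdef, Finset.card_sdiff_of_subset (Finset.subset_univ _), Finset.card_univ]
    congr 1
    rw [Finset.card_insert_of_notMem (by simp [hvx, hvy]),
        Finset.card_insert_of_notMem (by simp [hxy]), Finset.card_singleton]
  have key : ∀ S : Finset V, S ⊆ C → insert v (insert x S) \ {v, x} = S := by
    intro S hS
    ext a
    simp only [Finset.mem_sdiff, Finset.mem_insert, Finset.mem_singleton]
    constructor
    · rintro ⟨(rfl | rfl | ha), h2⟩ <;> tauto
    · intro ha
      have h1 : a ≠ v := fun hav => hvC (hav ▸ hS ha)
      have h2 : a ≠ x := fun hax => hxC (hax ▸ hS ha)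
      tauto
  calc 2 ^ (Fintype.card V - 3) = C.powerset.card := by
        rw [Finset.card_powerset, hCcard]
    _ ≤ _ := by
        apply Finset.card_le_card_of_injOn (fun S => insert v (insert x S))
        · intro S hS
          rw [Finset.mem_coe, Finset.mem_powerset] at hS
          simp only [Finset.mem_coe, Finset.mem_filter, Finset.mem_univ, true_and]
          refine ⟨by simp, by simp, ?_⟩
          simp only [Finset.mem_insert]
          rintro (h | h | h)
          · exact hvy h.symm
          · exact hxy h.symm
          · exact hyC (hS h)
        · intro S hS T hT hST
          rw [Finset.mem_coe, Finset.mem_powerset] at hS hT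
          have := congrArg (· \ ({v, x} : Finset V)) hST
          simpa [key S hS, key T hT] using this

/-- Any `e ∈ G.edgeSet` has a representation `s(a,b)` with `a ≠ b`. -/
lemma aux_edge_rep {V : Type*} (G : SimpleGraph V) :
    ∀ e : Sym2 V, e ∈ G.edgeSet → ∃ a b : V, a ≠ b ∧ e = s(a, b) := by
  intro e
  induction e using Sym2.ind with
  | _ a b => exact fun he => ⟨a, b, (G.mem_edgeSet.1 he).ne, rfl⟩

/-- If every vertex neighbourhood contains a matching of size at least r, then there is a
set X of vertices and a set E of at least n·r/8 edges inside X such that every edge of E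
forms a triangle with some vertex outside X. -/
theorem partition_lemma_matching {V : Type*} [Fintype V] [DecidableEq V] (G : SimpleGraph V)
    [DecidableRel G.Adj] (r : ℕ)
    (h : ∀ v : V, ∃ M : Finset (Sym2 V), ↑M ⊆ G.edgeSet ∧
      (∀ e ∈ M, ∀ x ∈ e, G.Adj v x) ∧
      (M : Set (Sym2 V)).Pairwise (fun e f => ∀ x ∈ e, x ∉ f) ∧ r ≤ M.card) :
    ∃ (X : Finset V) (E : Finset (Sym2 V)), E ⊆ G.edgeFinset ∧
      (∀ e ∈ E, ∀ x ∈ e, x ∈ X) ∧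
      (Fintype.card V : ℝ) * r / 8 ≤ E.card ∧
      (∀ x y : V, s(x, y) ∈ E → ∃ z ∉ X, G.Adj x z ∧ G.Adj y z) := by
  classical
  by_cases hnr : Fintype.card V = 0 ∨ r = 0
  · refine ⟨∅, ∅, by simp, by simp, ?_, by simp⟩
    rcases hnr with h0 | h0 <;> simp [h0]
  push_neg at hnr
  obtain ⟨hn0, hr0⟩ := hnr
  choose M hMe hMadj hMdisj hMcard using h
  have edge_fact : ∀ v a b : V, s(a, b) ∈ M v →
      G.Adj v a ∧ G.Adj v b ∧ G.Adj a b := by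
    intro v a b hab
    have hadj : G.Adj a b := (G.mem_edgeSet).1 (hMe v hab)
    exact ⟨hMadj v _ hab a (by simp), hMadj v _ hab b (by simp), hadj⟩
  set n := Fintype.card V with hn
  -- `n ≥ 3`
  have h3 : 3 ≤ n := by
    obtain ⟨v0⟩ : Nonempty V := Fintype.card_pos_iff.1 (Nat.pos_of_ne_zero hn0)
    obtain ⟨e, he⟩ : (M v0).Nonempty := Finset.card_pos.1 (lt_of_lt_of_le (Nat.pos_of_ne_zero hr0) (hMcard v0))
    obtain ⟨a, b, hab, rfl⟩ := aux_edge_rep G e (hMe v0 he)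
    have h1 := edge_fact v0 a b he
    have hva : v0 ≠ a := h1.1.ne
    have hvb : v0 ≠ b := h1.2.1.ne
    have : ({v0, a, b} : Finset V).card = 3 := by
      rw [Finset.card_insert_of_notMem (by simp [hva, hvb]),
          Finset.card_insert_of_notMem (by simp [hab]), Finset.card_singleton]
    calc 3 = ({v0, a, b} : Finset V).card := this.symm
      _ ≤ n := by rw [hn, ← Finset.card_univ]; exact Finset.card_le_card (Finset.subset_univ _)
  set Pp : V × V → Finset V → Prop :=
    fun p X => p.1 ∈ X ∧ p.2 ∈ X ∧ ∃ y, y ∉ X ∧ s(p.2, y) ∈ M p.1 with hPp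
  set P : Finset V → Finset (V × V) :=
    (fun X => Finset.univ.filter fun p => Pp p X) with hPdef
  set E : Finset V → Finset (Sym2 V) := fun X => (P X).image fun p => s(p.1, p.2) with hEdef
  -- each edge set has at least half as many elements as the pair set
  have key1 : ∀ X : Finset V, (P X).card ≤ 2 * (E X).card := by
    intro X
    apply Finset.card_le_mul_card_image
    intro b hb
    obtain ⟨q, hq, rfl⟩ := Finset.mem_image.1 hb
    have hsub : ((P X).filter fun p => s(p.1, p.2) = s(q.1, q.2)) ⊆ {q, (q.2, q.1)} := by
      intro p hp
      have hp2 := (Finset.mem_filter.1 hp).2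
      rw [Sym2.eq_iff] at hp2
      simp only [Finset.mem_insert, Finset.mem_singleton, Prod.ext_iff]
      tauto
    calc _ ≤ ({q, (q.2, q.1)} : Finset (V × V)).card := Finset.card_le_card hsub
      _ ≤ 2 := Finset.card_insert_le _ _ |>.trans (by simp)
  -- support of the matchings
  set T : V → Finset V := fun v => Finset.univ.filter fun x => ∃ y : V, s(x, y) ∈ M v with hTdef
  have hT : ∀ v : V, 2 * r ≤ (T v).card := by
    intro v
    have hdisj : (↑(M v) : Set (Sym2 V)).PairwiseDisjoint
        (fun e => Finset.univ.filter (· ∈ e)) := by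
      intro e he f hf hef
      refine Finset.disjoint_left.2 fun a ha haf => ?_
      exact hMdisj v he hf hef a (Finset.mem_filter.1 ha).2 (Finset.mem_filter.1 haf).2
    have hsub : (M v).biUnion (fun e => Finset.univ.filter (· ∈ e)) ⊆ T v := by
      intro a ha
      obtain ⟨e, he, hae⟩ := Finset.mem_biUnion.1 ha
      obtain ⟨b, rfl⟩ := Sym2.mem_iff_exists.1 (Finset.mem_filter.1 hae).2
      exact Finset.mem_filter.2 ⟨Finset.mem_univ _, ⟨b, he⟩⟩
    have hcards : ∀ e ∈ M v, (Finset.univ.filter (· ∈ e)).card = 2 := by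
      intro e he
      obtain ⟨a, b, hab, rfl⟩ := aux_edge_rep G e (hMe v he)
      have : (Finset.univ.filter (· ∈ s(a, b))) = {a, b} := by
        ext z; simp [Sym2.mem_iff]
      rw [this, Finset.card_insert_of_notMem (by simp [hab]), Finset.card_singleton]
    calc 2 * r ≤ 2 * (M v).card := Nat.mul_le_mul_left _ (hMcard v)
      _ = ∑ e ∈ M v, (Finset.univ.filter (· ∈ e)).card := by
          rw [Finset.sum_congr rfl hcards, Finset.sum_const, smul_eq_mul, Nat.mul_comm]
      _ = ((M v).biUnion fun e => Finset.univ.filter (· ∈ e)).card :=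
          (Finset.card_biUnion fun e he f hf hef => hdisj he hf hef).symm
      _ ≤ (T v).card := Finset.card_le_card hsub
  -- for each useful pair the number of good X's is at least 2^(n-3)
  have key4 : ∀ v x : V, x ∈ T v →
      2 ^ (n - 3) ≤ (Finset.univ.filter fun X : Finset V => Pp (v, x) X).card := by
    intro v x hx
    obtain ⟨y, hy⟩ := (Finset.mem_filter.1 hx).2
    obtain ⟨h1, h2, h3'⟩ := edge_fact v x y hy
    refine le_trans (aux_count_subsets h1.ne h2.ne h3'.ne) (Finset.card_le_card ?_)
    intro X hX
    obtain ⟨hv, hxX, hyX⟩ := (Finset.mem_filter.1 hX).2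
    exact Finset.mem_filter.2 ⟨Finset.mem_univ _, hv, hxX, ⟨y, hyX, hy⟩⟩
  -- double counting
  have hswap : ∑ X : Finset V, (P X).card
      = ∑ p : V × V, (Finset.univ.filter fun X : Finset V => Pp p X).card := by
    simp only [hPdef, Finset.card_filter]
    exact Finset.sum_comm
  have hlow : n * (2 * r * 2 ^ (n - 3))
      ≤ ∑ p : V × V, (Finset.univ.filter fun X : Finset V => Pp p X).card := by
    rw [Fintype.sum_prod_type]
    calc n * (2 * r * 2 ^ (n - 3)) = ∑ _v : V, 2 * r * 2 ^ (n - 3) := by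
          rw [Finset.sum_const, Finset.card_univ, smul_eq_mul, hn]
      _ ≤ _ := by
          refine Finset.sum_le_sum fun v _ => ?_
          calc 2 * r * 2 ^ (n - 3) ≤ (T v).card * 2 ^ (n - 3) :=
                Nat.mul_le_mul_right _ (hT v)
            _ = ∑ _x ∈ T v, 2 ^ (n - 3) := by rw [Finset.sum_const, smul_eq_mul]
            _ ≤ ∑ x ∈ T v, (Finset.univ.filter fun X : Finset V => Pp (v, x) X).card :=
                Finset.sum_le_sum fun x hx => key4 v x hx
            _ ≤ ∑ x : V, (Finset.univ.filter fun X : Finset V => Pp (v, x) X).card :=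
                Finset.sum_le_sum_of_subset (Finset.subset_univ _)
  have hEsum : n * r * 2 ^ (n - 3) ≤ ∑ X : Finset V, (E X).card := by
    have h1 : n * (2 * r * 2 ^ (n - 3)) ≤ ∑ X : Finset V, (P X).card := by
      rw [hswap]; exact hlow
    have h2 : ∑ X : Finset V, (P X).card ≤ 2 * ∑ X : Finset V, (E X).card := by
      rw [Finset.mul_sum]
      exact Finset.sum_le_sum fun X _ => key1 X
    have h3' : 2 * (n * r * 2 ^ (n - 3)) ≤ 2 * ∑ X : Finset V, (E X).card := by
      calc 2 * (n * r * 2 ^ (n - 3)) = n * (2 * r * 2 ^ (n - 3)) := by ring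
        _ ≤ _ := le_trans h1 h2
    exact Nat.le_of_mul_le_mul_left h3' (by norm_num)
  -- pick a maximizing X
  obtain ⟨X₀, -, hmax⟩ := Finset.exists_max_image (Finset.univ : Finset (Finset V))
    (fun X => (E X).card) ⟨∅, Finset.mem_univ ∅⟩
  have hfinal : n * r * 2 ^ (n - 3) ≤ 2 ^ n * (E X₀).card := by
    refine le_trans hEsum ?_
    calc ∑ X : Finset V, (E X).card
        ≤ (Finset.univ : Finset (Finset V)).card • (E X₀).card :=
          Finset.sum_le_card_nsmul _ _ _ fun X _ => hmax X (Finset.mem_univ X)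
      _ = 2 ^ n * (E X₀).card := by
          rw [Finset.card_univ, Fintype.card_finset, smul_eq_mul, hn]
  -- the real-number bound
  have hreal : (n : ℝ) * r / 8 ≤ (E X₀).card := by
    have hcast : ((n : ℝ) * r) * 2 ^ (n - 3) ≤ 2 ^ n * (E X₀).card := by
      exact_mod_cast hfinal
    have hpow : (2 : ℝ) ^ n = 8 * 2 ^ (n - 3) := by
      have : n = 3 + (n - 3) := (Nat.add_sub_cancel' h3).symm
      rw [this, pow_add]; norm_num
    rw [div_le_iff₀ (by norm_num : (0:ℝ) < 8)]
    have hpos : (0 : ℝ) < 2 ^ (n - 3) := by positivity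
    refine le_of_mul_le_mul_right ?_ hpos
    calc (n : ℝ) * r * 2 ^ (n - 3) ≤ 2 ^ n * (E X₀).card := hcast
      _ = (E X₀).card * 8 * 2 ^ (n - 3) := by rw [hpow]; ring
  -- conclusion
  refine ⟨X₀, E X₀, ?_, ?_, hreal, ?_⟩
  · intro e he
    obtain ⟨p, hp, rfl⟩ := Finset.mem_image.1 he
    obtain ⟨-, -, y, -, hy⟩ := (Finset.mem_filter.1 hp).2
    exact SimpleGraph.mem_edgeFinset.2 (G.mem_edgeSet.2 (edge_fact p.1 p.2 y hy).1)
  · intro e he a ha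
    obtain ⟨p, hp, rfl⟩ := Finset.mem_image.1 he
    obtain ⟨h1, h2, -⟩ := (Finset.mem_filter.1 hp).2
    rcases Sym2.mem_iff.1 ha with rfl | rfl
    · exact h1
    · exact h2
  · intro a b hab
    obtain ⟨⟨pv, px⟩, hp, hpe⟩ := Finset.mem_image.1 hab
    obtain ⟨-, -, y, hyX, hy⟩ := (Finset.mem_filter.1 hp).2
    obtain ⟨-, hvy, hxy⟩ := edge_fact pv px y hy
    rcases Sym2.eq_iff.1 hpe with ⟨h1, h2⟩ | ⟨h1, h2⟩
    · subst h1; subst h2; exact ⟨y, hyX, hvy, hxy⟩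
    · subst h1; subst h2; exact ⟨y, hyX, hxy, hvy⟩
end

section
/- Every graph G with κ(G) ≥ (1+ε)α(G) for fixed ε > 0 and α(G) sufficiently large contains a cycle of length 5. -/
open SimpleGraph Finset

set_option linter.unusedSectionVars false
set_option linter.unusedVariables false
set_option maxHeartbeats 1000000

lemma mkC5 {V : Type} (G : SimpleGraph V) {a b c d e : V}
    (hab : G.Adj a b) (hbc : G.Adj b c) (hcd : G.Adj c d) (hde : G.Adj d e)
    (hea : G.Adj e a)
    (h1 : a ≠ c) (h2 : a ≠ d) (h3 : b ≠ d) (h4 : b ≠ e) (h5 : c ≠ e) :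
    hasCycleOfLength G 5 := by
  refine ⟨a, .cons hab (.cons hbc (.cons hcd (.cons hde (.cons hea .nil)))), ?_, by simp⟩
  have nab := hab.ne; have nbc := hbc.ne; have ncd := hcd.ne
  have nde := hde.ne; have nea := hea.ne
  constructor
  · constructor
    · simp [Walk.isTrail_def, Sym2.eq_iff]
      aesop
    · simp
  · simp
    aesop

set_option linter.unusedSectionVars false
set_option linter.unusedVariables false
set_option maxHeartbeats 1000000

section helpers
variable {V : Type} [Fintype V] [DecidableEq V] (G : SimpleGraph V)

lemma card7 (a b c d e f g : V) : ({a,b,c,d,e,f,g} : Finset V).card ≤ 7 := by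
  refine le_trans (Finset.card_insert_le _ _) (Nat.succ_le_succ ?_)
  refine le_trans (Finset.card_insert_le _ _) (Nat.succ_le_succ ?_)
  refine le_trans (Finset.card_insert_le _ _) (Nat.succ_le_succ ?_)
  refine le_trans (Finset.card_insert_le _ _) (Nat.succ_le_succ ?_)
  refine le_trans (Finset.card_insert_le _ _) (Nat.succ_le_succ ?_)
  refine le_trans (Finset.card_insert_le _ _) (Nat.succ_le_succ ?_)
  simp

lemma indep_bdd : BddAbove {k | ∃ s : Finset V, (s : Set V).Pairwise (fun a b => ¬ G.Adj a b) ∧ s.card = k} := by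
  refine ⟨Fintype.card V, fun k hk => ?_⟩
  obtain ⟨s, _, rfl⟩ := hk
  exact s.card_le_univ

lemma indep_card_le {s : Finset V}
    (h : (s : Set V).Pairwise (fun a b => ¬ G.Adj a b)) : s.card ≤ _root_.indepNum G :=
  le_csSup (indep_bdd G) ⟨s, h, rfl⟩

lemma exists_indep_card : ∃ s : Finset V,
    (s : Set V).Pairwise (fun a b => ¬ G.Adj a b) ∧ s.card = _root_.indepNum G := by
  have h0 : (0:ℕ) ∈ {k | ∃ s : Finset V, (s : Set V).Pairwise (fun a b => ¬ G.Adj a b) ∧ s.card = k} :=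
    ⟨∅, by simp, rfl⟩
  exact Nat.sSup_mem ⟨0, h0⟩ (indep_bdd G)

lemma conn_le_degree [DecidableRel G.Adj] (v : V) :
    vertexConnectivity G ≤ G.degree v := by
  apply Nat.sInf_le
  refine ⟨G.neighborFinset v, by simp [SimpleGraph.card_neighborFinset_eq_degree], ?_⟩
  by_cases h : ((G.neighborFinset v)ᶜ : Finset V).card ≤ 1
  · exact Or.inl h
  · refine Or.inr fun hc => ?_
    have hv : v ∈ ((G.neighborFinset v)ᶜ : Finset V) := by simp
    obtain ⟨w, hw, hwv⟩ : ∃ w ∈ ((G.neighborFinset v)ᶜ : Finset V), w ≠ v := by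
      by_contra hcon
      push_neg at hcon
      have : ((G.neighborFinset v)ᶜ : Finset V) ⊆ {v} := fun x hx => by
        simp [hcon x hx]
      exact h (le_trans (Finset.card_le_card this) (by simp))
    have hreach := hc.preconnected ⟨v, hv⟩ ⟨w, hw⟩
    obtain ⟨p⟩ := hreach
    have hnn : ¬ p.Nil := SimpleGraph.Walk.not_nil_of_ne (by simpa using Ne.symm hwv)
    have hadj := p.adj_snd hnn
    have : G.Adj v (p.getVert 1).val := hadj
    have hmem : (p.getVert 1).val ∈ G.neighborFinset v := by simpa using this
    have hx : ¬ G.Adj v (p.getVert 1).val := by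
      have h2 := (p.getVert 1).2
      simp only [Finset.coe_compl, Set.mem_compl_iff, Finset.mem_coe,
        SimpleGraph.mem_neighborFinset] at h2
      exact h2
    exact hx this

lemma decomp (A : Finset V) : ∃ (U : Finset V) (M : Finset (V × V)),
    U ⊆ A ∧ ((U : Set V)).Pairwise (fun a b => ¬ G.Adj a b) ∧
    (∀ p ∈ M, G.Adj p.1 p.2 ∧ p.1 ∈ A ∧ p.2 ∈ A) ∧
    (∀ p ∈ M, ∀ q ∈ M, p ≠ q → p.1 ≠ q.1 ∧ p.1 ≠ q.2 ∧ p.2 ≠ q.1 ∧ p.2 ≠ q.2) ∧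
    A.card ≤ U.card + 2 * M.card := by
  classical
  induction A using Finset.strongInduction with
  | _ A ih =>
    by_cases hedge : ∃ a ∈ A, ∃ b ∈ A, G.Adj a b
    · obtain ⟨a, ha, b, hb, hab⟩ := hedge
      have hne : a ≠ b := hab.ne
      have hsub : A \ {a, b} ⊂ A := by
        apply Finset.sdiff_ssubset ?_ (by simp)
        intro x hx
        simp at hx
        rcases hx with rfl | rfl <;> assumption
      obtain ⟨U, M, hUA, hUind, hM, hMd, hcard⟩ := ih _ hsub
      refine ⟨U, insert (a, b) M, hUA.trans (Finset.sdiff_subset), hUind, ?_, ?_, ?_⟩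
      · intro p hp
        rcases Finset.mem_insert.mp hp with rfl | hp
        · exact ⟨hab, ha, hb⟩
        · obtain ⟨h1, h2, h3⟩ := hM p hp
          exact ⟨h1, (Finset.mem_sdiff.mp h2).1, (Finset.mem_sdiff.mp h3).1⟩
      · intro p hp q hq hpq
        have key : ∀ r ∈ M, r.1 ≠ a ∧ r.1 ≠ b ∧ r.2 ≠ a ∧ r.2 ≠ b := by
          intro r hr
          obtain ⟨_, h2, h3⟩ := hM r hr
          have := Finset.mem_sdiff.mp h2
          have := Finset.mem_sdiff.mp h3
          simp_all
        rcases Finset.mem_insert.mp hp with rfl | hp <;>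
          rcases Finset.mem_insert.mp hq with rfl | hq
        · exact absurd rfl hpq
        · obtain ⟨k1, k2, k3, k4⟩ := key q hq
          exact ⟨k1.symm, k3.symm, k2.symm, k4.symm⟩
        · exact key p hp
        · exact hMd p hp q hq hpq
      · have hab_sub : {a, b} ⊆ A := by
          intro x hx; simp at hx; rcases hx with rfl | rfl <;> assumption
        have h2 : ({a, b} : Finset V).card = 2 := by
          rw [Finset.card_insert_of_notMem (by simp [hne]), Finset.card_singleton]
        have hnotmem : (a, b) ∉ M := by
          intro hmem
          have := (hM _ hmem).2.1
          simp at this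
        rw [Finset.card_insert_of_notMem hnotmem]
        have := Finset.card_sdiff_of_subset hab_sub
        omega
    · push_neg at hedge
      refine ⟨A, ∅, le_refl _, ?_, by simp, by simp, by simp⟩
      intro x hx y hy _
      exact hedge x (by simpa using hx) y (by simpa using hy)

lemma nbhd_indep (hno : ¬ hasCycleOfLength G 5) (x : V) (A : Finset V)
    (hA : ∀ a ∈ A, G.Adj x a) :
    ∃ I : Finset V, I ⊆ A ∧ ((I : Set V)).Pairwise (fun a b => ¬ G.Adj a b) ∧
      A.card ≤ 3 * I.card := by
  classical
  obtain ⟨U, M, hUA, hUind, hM, hMd, hcard⟩ := decomp G A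
  set J : Finset V := M.image Prod.fst with hJ
  have hJcard : J.card = M.card := by
    apply Finset.card_image_of_injOn
    intro p hp q hq hpq
    by_contra hne
    exact (hMd p hp q hq hne).1 hpq
  have hJA : J ⊆ A := by
    intro j hj
    obtain ⟨p, hp, rfl⟩ := Finset.mem_image.mp hj
    exact (hM p hp).2.1
  have hJind : ((J : Set V)).Pairwise (fun a b => ¬ G.Adj a b) := by
    intro j1 hj1 j2 hj2 hne hadj
    obtain ⟨p, hp, rfl⟩ := Finset.mem_image.mp (Finset.mem_coe.mp hj1)
    obtain ⟨q, hq, rfl⟩ := Finset.mem_image.mp (Finset.mem_coe.mp hj2)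
    have hpq : p ≠ q := fun h => hne (by rw [h])
    obtain ⟨d1, d2, d3, d4⟩ := hMd p hp q hq hpq
    exact hno (mkC5 G (hA p.2 (hM p hp).2.2) ((hM p hp).1.symm) hadj ((hM q hq).1)
      ((hA q.2 (hM q hq).2.2).symm)
      (hA p.1 (hM p hp).2.1).ne (hA q.1 (hM q hq).2.1).ne d3 d4 d2)
  by_cases hUJ : J.card ≤ U.card
  · exact ⟨U, hUA, hUind, by omega⟩
  · exact ⟨J, hJA, hJind, by omega⟩

lemma cross (hno : ¬ hasCycleOfLength G 5) {u xi yi xj a b : V}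
    (hxi : G.Adj u xi) (hyi : G.Adj u yi) (hxj : G.Adj u xj)
    (hexi : G.Adj xi yi)
    (hd1 : xi ≠ xj) (hd3 : yi ≠ xj)
    (ha : G.Adj xi a) (hb : G.Adj xj b)
    (hau : a ≠ u) (haxj : a ≠ xj) (hayi : a ≠ yi)
    (hbu : b ≠ u) (hbxi : b ≠ xi) :
    ¬ G.Adj a b ∧ a ≠ b := by
  constructor
  · intro hadj
    exact hno (mkC5 G hadj hb.symm hxj.symm hxi ha
      haxj hau hbu hbxi hd1.symm)
  · rintro rfl
    exact hno (mkC5 G ha hb.symm hxj.symm hyi hexi.symm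
      hd1 (fun h => hxi.ne h.symm) hau hayi hd3.symm)

end helpers

/-- For every ε > 0, every graph with κ(G) ≥ (1+ε)α(G) and α(G) sufficiently large
contains a cycle of length 5. -/
theorem c5_of_connectivity (ε : ℝ) (hε : 0 < ε) :
    ∃ α₀ : ℕ, ∀ (V : Type) [Fintype V] [DecidableEq V] (G : SimpleGraph V),
      α₀ ≤ _root_.indepNum G →
      (1 + ε) * _root_.indepNum G ≤ (vertexConnectivity G : ℝ) →
      hasCycleOfLength G 5 := by
  refine ⟨⌈(22:ℝ)/ε⌉₊, ?_⟩
  intro V _ _ G hα hκ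
  by_contra hno
  classical
  haveI : DecidableRel G.Adj := Classical.decRel _
  set α := _root_.indepNum G with hαdef
  set κ := vertexConnectivity G with hκdef
  -- κ ≥ α + 22
  have hεα : (22:ℝ) ≤ ε * α := by
    have h1 : (22:ℝ)/ε ≤ (⌈(22:ℝ)/ε⌉₊ : ℝ) := Nat.le_ceil _
    have h2 : ((⌈(22:ℝ)/ε⌉₊ : ℕ) : ℝ) ≤ (α : ℝ) := by exact_mod_cast hα
    calc (22:ℝ) = ε * (22/ε) := by field_simp
      _ ≤ ε * α := by
          apply mul_le_mul_of_nonneg_left (h1.trans h2) hε.le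
  have hκα : α + 22 ≤ κ := by
    have : (α:ℝ) + 22 ≤ (κ:ℝ) := by
      have := hκ
      rw [one_add_mul] at this
      linarith
    exact_mod_cast this
  -- a vertex u
  have hα1 : 1 ≤ α := by
    by_contra h
    push_neg at h
    have hz : α = 0 := by omega
    rw [hz] at hεα
    norm_num at hεα
  obtain ⟨s, hs, hscard⟩ := exists_indep_card G
  have : s.Nonempty := Finset.card_pos.mp (by omega)
  obtain ⟨u, hu⟩ := this
  -- min degree
  have hdeg : ∀ v : V, κ ≤ (G.neighborFinset v).card := fun v => by
    rw [SimpleGraph.card_neighborFinset_eq_degree]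
    exact conn_le_degree G v
  -- decompose the neighborhood of u
  obtain ⟨U, M, hUA, hUind, hM, hMd, hcard⟩ := decomp G (G.neighborFinset u)
  have hUα : U.card ≤ α := indep_card_le G hUind
  by_cases hMc : M.card ≤ 2
  · have := hdeg u
    omega
  · -- three disjoint edges
    obtain ⟨T, hTM, hT3⟩ := Finset.exists_subset_card_eq (s := M) (n := 3) (by omega)
    obtain ⟨p1, p2, p3, h12, h13, h23, rfl⟩ := Finset.card_eq_three.mp hT3
    have hp1 : p1 ∈ M := hTM (by simp)
    have hp2 : p2 ∈ M := hTM (by simp)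
    have hp3 : p3 ∈ M := hTM (by simp)
    have hadj_u : ∀ p ∈ M, G.Adj u p.1 ∧ G.Adj u p.2 ∧ G.Adj p.1 p.2 := by
      intro p hp
      obtain ⟨h1, h2, h3⟩ := hM p hp
      exact ⟨by simpa using h2, by simpa using h3, h1⟩
    -- independent sets in the neighborhoods of p_i.1
    have getI : ∀ p ∈ M, ∃ I : Finset V,
        (∀ a ∈ I, G.Adj p.1 a) ∧ ((I : Set V)).Pairwise (fun a b => ¬ G.Adj a b) ∧
        κ ≤ 3 * I.card := by
      intro p hp
      obtain ⟨I, hIA, hIind, hIcard⟩ := nbhd_indep G hno p.1 (G.neighborFinset p.1)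
        (fun a ha => by simpa using ha)
      exact ⟨I, fun a ha => by simpa using hIA ha, hIind, le_trans (hdeg p.1) hIcard⟩
    obtain ⟨I1, hI1adj, hI1ind, hI1card⟩ := getI p1 hp1
    obtain ⟨I2, hI2adj, hI2ind, hI2card⟩ := getI p2 hp2
    obtain ⟨I3, hI3adj, hI3ind, hI3card⟩ := getI p3 hp3
    set F : Finset V := {u, p1.1, p1.2, p2.1, p2.2, p3.1, p3.2} with hF
    have hFcard : F.card ≤ 7 := card7 _ _ _ _ _ _ _
    set J1 := I1 \ F with hJ1
    set J2 := I2 \ F with hJ2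
    set J3 := I3 \ F with hJ3
    -- the key cross lemma, specialized
    have key : ∀ p ∈ ({p1, p2, p3} : Finset (V × V)), ∀ q ∈ ({p1, p2, p3} : Finset (V × V)),
        p ≠ q → ∀ a b : V, G.Adj p.1 a → G.Adj q.1 b → a ∉ F → b ∉ F →
        ¬ G.Adj a b ∧ a ≠ b := by
      intro p hp q hq hpq a b ha hb haF hbF
      have hpM : p ∈ M := hTM hp
      have hqM : q ∈ M := hTM hq
      obtain ⟨d1, d2, d3, d4⟩ := hMd p hpM q hqM hpq
      have hmemF : p.1 ∈ F ∧ p.2 ∈ F ∧ q.1 ∈ F ∧ q.2 ∈ F := by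
        simp only [Finset.mem_insert, Finset.mem_singleton] at hp hq
        rcases hp with rfl | rfl | rfl <;> rcases hq with rfl | rfl | rfl <;>
          simp [hF]
      have haF' : ∀ x ∈ F, a ≠ x := fun x hx h => haF (h ▸ hx)
      have hbF' : ∀ x ∈ F, b ≠ x := fun x hx h => hbF (h ▸ hx)
      have huF : u ∈ F := by simp [hF]
      exact cross G hno (hadj_u p hpM).1 (hadj_u p hpM).2.1 (hadj_u q hqM).1
        (hadj_u p hpM).2.2 d1 d3 ha hb
        (haF' u huF) (haF' q.1 hmemF.2.2.1) (haF' p.2 hmemF.2.1)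
        (hbF' u huF) (hbF' p.1 hmemF.1)
    set W := J1 ∪ (J2 ∪ J3) with hW
    -- independence of W
    have hWind : ((W : Set V)).Pairwise (fun a b => ¬ G.Adj a b) := by
      intro a ha b hb hne
      simp only [hW, Finset.coe_union, Set.mem_union, Finset.mem_coe,
        hJ1, hJ2, hJ3, Finset.mem_sdiff] at ha hb
      have triv : (p1 : V × V) ∈ ({p1, p2, p3} : Finset (V × V)) := by simp
      have triv2 : (p2 : V × V) ∈ ({p1, p2, p3} : Finset (V × V)) := by simp
      have triv3 : (p3 : V × V) ∈ ({p1, p2, p3} : Finset (V × V)) := by simp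
      rcases ha with ⟨ha1, haF⟩ | ⟨ha2, haF⟩ | ⟨ha3, haF⟩ <;>
        rcases hb with ⟨hb1, hbF⟩ | ⟨hb2, hbF⟩ | ⟨hb3, hbF⟩
      · exact hI1ind (by simpa using ha1) (by simpa using hb1) hne
      · exact (key p1 triv p2 triv2 h12 a b (hI1adj a ha1) (hI2adj b hb2) haF hbF).1
      · exact (key p1 triv p3 triv3 h13 a b (hI1adj a ha1) (hI3adj b hb3) haF hbF).1
      · exact (key p2 triv2 p1 triv h12.symm a b (hI2adj a ha2) (hI1adj b hb1) haF hbF).1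
      · exact hI2ind (by simpa using ha2) (by simpa using hb2) hne
      · exact (key p2 triv2 p3 triv3 h23 a b (hI2adj a ha2) (hI3adj b hb3) haF hbF).1
      · exact (key p3 triv3 p1 triv h13.symm a b (hI3adj a ha3) (hI1adj b hb1) haF hbF).1
      · exact (key p3 triv3 p2 triv2 h23.symm a b (hI3adj a ha3) (hI2adj b hb2) haF hbF).1
      · exact hI3ind (by simpa using ha3) (by simpa using hb3) hne
    -- disjointness
    have triv : (p1 : V × V) ∈ ({p1, p2, p3} : Finset (V × V)) := by simp
    have triv2 : (p2 : V × V) ∈ ({p1, p2, p3} : Finset (V × V)) := by simp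
    have triv3 : (p3 : V × V) ∈ ({p1, p2, p3} : Finset (V × V)) := by simp
    have hd12 : Disjoint J1 J2 := by
      rw [Finset.disjoint_left]
      intro a ha1 ha2
      rw [hJ1, Finset.mem_sdiff] at ha1
      rw [hJ2, Finset.mem_sdiff] at ha2
      exact (key p1 triv p2 triv2 h12 a a (hI1adj a ha1.1) (hI2adj a ha2.1) ha1.2 ha2.2).2 rfl
    have hd13 : Disjoint J1 J3 := by
      rw [Finset.disjoint_left]
      intro a ha1 ha3
      rw [hJ1, Finset.mem_sdiff] at ha1
      rw [hJ3, Finset.mem_sdiff] at ha3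
      exact (key p1 triv p3 triv3 h13 a a (hI1adj a ha1.1) (hI3adj a ha3.1) ha1.2 ha3.2).2 rfl
    have hd23 : Disjoint J2 J3 := by
      rw [Finset.disjoint_left]
      intro a ha2 ha3
      rw [hJ2, Finset.mem_sdiff] at ha2
      rw [hJ3, Finset.mem_sdiff] at ha3
      exact (key p2 triv2 p3 triv3 h23 a a (hI2adj a ha2.1) (hI3adj a ha3.1) ha2.2 ha3.2).2 rfl
    have hWcard : W.card = J1.card + J2.card + J3.card := by
      rw [hW, Finset.card_union_of_disjoint (by
        rw [Finset.disjoint_union_right]; exact ⟨hd12, hd13⟩),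
        Finset.card_union_of_disjoint hd23]
      ring
    have hsd1 := Finset.le_card_sdiff F I1
    have hsd2 := Finset.le_card_sdiff F I2
    have hsd3 := Finset.le_card_sdiff F I3
    have hWα : W.card ≤ α := indep_card_le G hWind
    -- numeric contradiction
    rw [← hJ1] at hsd1
    rw [← hJ2] at hsd2
    rw [← hJ3] at hsd3
    omega
end
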